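/- arXiv:0801.4866 — 2 statements merged into one kernel-verified Lean document; each statement's English description precedes it below -/
import Mathlib

section
/- Let (A,m) be a d-dimensional Noetherian local ring with infinite residue field A/m, and let J be a minimal reduction of an m-primary ideal I. Then J can be generated by a superficial sequence for I. -/
open IsLocalRing Polynomial

/-- The length of a module, as a natural number (junk value `0` if infinite). -/
noncomputable def flen (R M : Type*) [CommRing R] [AddCommGroup M] [Module R M] : ℕ :=
  (WithBot.unbotD 0 (Order.krullDim (Submodule R M))).toNat

/-- `qlen N P` is the length `λ(N/(P ∩ N))` for ideals `N P` of `R`. -/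
noncomputable def qlen {R : Type*} [CommRing R] (N P : Ideal R) : ℕ :=
  flen R (↥N ⧸ (Submodule.comap N.subtype P))

/-- `J` is a reduction of `I` if `J ≤ I` and `J * Iⁿ = I^(n+1)` for some `n ≥ 0`. -/
def IsReduction {R : Type*} [CommRing R] (J I : Ideal R) : Prop :=
  J ≤ I ∧ ∃ n : ℕ, J * I ^ n = I ^ (n + 1)

/-- `J` is a minimal reduction of `I` if it is a reduction containing no strictly
smaller reduction of `I`. -/
def IsMinimalReduction {R : Type*} [CommRing R] (J I : Ideal R) : Prop :=
  IsReduction J I ∧ ∀ K : Ideal R, K ≤ J → IsReduction K I → K = J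

/-- The reduction number `r_J(I)`. -/
noncomputable def redNum {R : Type*} [CommRing R] (J I : Ideal R) : ℕ :=
  sInf {n : ℕ | J * I ^ n = I ^ (n + 1)}

/-- The reduction number `r(I)`: minimum of `r_J(I)` over minimal reductions `J`. -/
noncomputable def redNumMin {R : Type*} [CommRing R] (I : Ideal R) : ℕ :=
  sInf {r : ℕ | ∃ J : Ideal R, IsMinimalReduction J I ∧ redNum J I = r}

/-- The depth of the ideal `J` on the ring `S`: the supremum of lengths of
`S`-regular sequences contained in `J`. -/
noncomputable def ringDepth {S : Type*} [CommRing S] (J : Ideal S) : ℕ∞ :=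
  sSup {n : ℕ∞ | ∃ rs : List S, (∀ x ∈ rs, x ∈ J) ∧
    RingTheory.Sequence.IsRegular S rs ∧ (rs.length : ℕ∞) = n}

/-- The associated graded ring `G(I) = ⊕ₙ Iⁿ/Iⁿ⁺¹`, realized as `R(I)/I·R(I)`
where `R(I)` is the Rees algebra of `I`. -/
abbrev AssocGraded {R : Type*} [CommRing R] (I : Ideal R) :=
  ↥(reesAlgebra I) ⧸ (Ideal.map (algebraMap R ↥(reesAlgebra I)) I)

/-- The ring map `R(I) → R` sending a polynomial to its constant coefficient. -/
noncomputable def reesConstCoeff {R : Type*} [CommRing R] (I : Ideal R) :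
    ↥(reesAlgebra I) →+* R :=
  (Polynomial.constantCoeff).comp (Subalgebra.val (reesAlgebra I)).toRingHom

/-- The maximal homogeneous ideal of the Rees algebra `R(I)` (over a local base ring):
elements whose constant coefficient lies in the Jacobson radical (= maximal ideal). -/
noncomputable def reesMaxHomIdeal {R : Type*} [CommRing R] (I : Ideal R) :
    Ideal ↥(reesAlgebra I) :=
  Ideal.comap (reesConstCoeff I) ((⊥ : Ideal R).jacobson)

/-- The maximal homogeneous ideal of `G(I)` (over a local base ring). -/
noncomputable def maxHomIdeal {R : Type*} [CommRing R] (I : Ideal R) :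
    Ideal (AssocGraded I) :=
  Ideal.map (Ideal.Quotient.mk _) (reesMaxHomIdeal I)

/-- The depth of `G(I)` with respect to its maximal homogeneous ideal. -/
noncomputable def gradedDepth {R : Type*} [CommRing R] (I : Ideal R) : ℕ∞ :=
  ringDepth (S := AssocGraded I) (maxHomIdeal I)

/-- `G(I)` is Cohen-Macaulay: its depth at the maximal homogeneous ideal equals
its Krull dimension. -/
def GradedCM {R : Type*} [CommRing R] (I : Ideal R) : Prop :=
  (gradedDepth I : WithBot ℕ∞) = ringKrullDim (AssocGraded I)

/-- The initial form `x* = x + I² ∈ G(I)₁` of an element `x ∈ I`, realized in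
`R(I)/I·R(I)` as the class of `x·t`. -/
noncomputable def initForm {R : Type*} [CommRing R] (I : Ideal R) (x : R) (hx : x ∈ I) :
    AssocGraded I :=
  Ideal.Quotient.mk _
    ⟨Polynomial.monomial 1 x, reesAlgebra.monomial_mem.mpr (by rwa [pow_one])⟩

/-- `a` is a superficial element for `I`. -/
def IsSuperficial {A : Type*} [CommRing A] (I : Ideal A) (a : A) : Prop :=
  ∃ c : ℕ, ∀ n > c, (I ^ n).colon (Ideal.span {a}) ⊓ I ^ c = I ^ (n - 1)

/-- `x₁, …, x_s` is a superficial sequence for `I`: each `xᵢ` is superficial for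
`I` modulo `(x₁, …, x_{i-1})`. -/
def IsSuperficialSeq {A : Type*} [CommRing A] (I : Ideal A) : List A → Prop
  | [] => True
  | x :: xs => x ∈ I ∧ IsSuperficial I x ∧
      IsSuperficialSeq (I.map (Ideal.Quotient.mk (Ideal.span {x})))
        (xs.map (Ideal.Quotient.mk (Ideal.span {x})))
  termination_by l => l.length
  decreasing_by simp


set_option maxHeartbeats 1000000
set_option synthInstance.maxHeartbeats 400000
set_option linter.unusedVariables false
set_option linter.unusedSectionVars false

namespace SupAux

attribute [-instance] Ideal.Quotient.semiring

variable {A : Type*} [CommRing A]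

noncomputable def pig (I : Ideal A) (n : ℕ) (z : A) (hz : z ∈ I ^ n) : AssocGraded I :=
  Ideal.Quotient.mk _ ⟨Polynomial.monomial n z, reesAlgebra.monomial_mem.mpr hz⟩

lemma pig_congr {I : Ideal A} {n m : ℕ} {z w : A} (hn : n = m) (hz : z = w)
    (h1 : z ∈ I ^ n) (h2 : w ∈ I ^ m) : pig I n z h1 = pig I m w h2 := by
  subst hn; subst hz; rfl

lemma pig_add {I : Ideal A} {n : ℕ} {z w : A} (hz : z ∈ I ^ n) (hw : w ∈ I ^ n) :
    pig I n (z + w) (add_mem hz hw) = pig I n z hz + pig I n w hw := by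
  rw [pig, pig, pig, ← map_add]
  congr 1
  ext
  simp [map_add]

lemma pig_mul {I : Ideal A} {n m : ℕ} {z w : A} (hz : z ∈ I ^ n) (hw : w ∈ I ^ m) :
    pig I n z hz * pig I m w hw = pig I (n + m) (z * w) (by rw [pow_add]; exact Ideal.mul_mem_mul hz hw) := by
  rw [pig, pig, pig, ← map_mul]
  congr 1
  ext
  simp [Polynomial.monomial_mul_monomial]

lemma pig_zero (I : Ideal A) (a : A) :
    pig I 0 a (by simp) = algebraMap A (AssocGraded I) a := by
  rw [pig]
  have : (⟨Polynomial.monomial 0 a, reesAlgebra.monomial_mem.mpr (by simp)⟩ : ↥(reesAlgebra I))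
      = algebraMap A ↥(reesAlgebra I) a := by
    ext
    simp [Polynomial.monomial_zero_left, Polynomial.algebraMap_eq]
  rw [this]
  rfl

lemma pig_smul {I : Ideal A} {n : ℕ} {z : A} (a : A) (hz : z ∈ I ^ n) :
    a • pig I n z hz = pig I n (a * z) (Ideal.mul_mem_left _ a hz) := by
  have h1 : a • pig I n z hz = Ideal.Quotient.mk _
      (a • (⟨Polynomial.monomial n z, reesAlgebra.monomial_mem.mpr hz⟩ : ↥(reesAlgebra I))) := rfl
  rw [h1, pig]
  congr 1
  apply Subtype.ext
  show a • Polynomial.monomial n z = Polynomial.monomial n (a * z)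
  rw [Polynomial.smul_monomial, smul_eq_mul]

/-- coefficients of members of `I·R(I)` lie in `I^(d+1)`. -/
lemma coeff_mem_of_mem_map {I : Ideal A} {p : ↥(reesAlgebra I)}
    (hp : p ∈ Ideal.map (algebraMap A ↥(reesAlgebra I)) I) (d : ℕ) :
    (p : A[X]).coeff d ∈ I ^ (d + 1) := by
  rw [Ideal.map] at hp
  induction hp using Submodule.span_induction generalizing d with
  | mem q hq =>
    obtain ⟨a, ha, rfl⟩ := hq
    have : ((algebraMap A ↥(reesAlgebra I) a : ↥(reesAlgebra I)) : A[X]) = Polynomial.C a := rfl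
    rw [this, Polynomial.coeff_C]
    split
    · simpa [pow_one, ‹d = 0›] using ha
    · exact Submodule.zero_mem _
  | zero => simp
  | add q r _ _ hq hr =>
    have : ((q + r : ↥(reesAlgebra I)) : A[X]) = (q : A[X]) + r := rfl
    rw [this, Polynomial.coeff_add]
    exact add_mem (hq d) (hr d)
  | smul r q _ hq =>
    have : ((r • q : ↥(reesAlgebra I)) : A[X]) = (r : A[X]) * q := rfl
    rw [this, Polynomial.coeff_mul]
    refine Submodule.sum_mem _ ?_
    rintro ⟨i, j⟩ hij
    rw [Finset.HasAntidiagonal.mem_antidiagonal] at hij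
    have h1 : (r : A[X]).coeff i ∈ I ^ i := (mem_reesAlgebra_iff I (r : A[X])).mp r.2 i
    have h2 : (q : A[X]).coeff j ∈ I ^ (j + 1) := hq j
    have : I ^ i * I ^ (j + 1) ≤ I ^ (d + 1) := by
      rw [← pow_add]
      exact Ideal.pow_le_pow_right (by omega)
    exact this (Ideal.mul_mem_mul h1 h2)

lemma pig_eq_zero_iff {I : Ideal A} {n : ℕ} {z : A} (hz : z ∈ I ^ n) :
    pig I n z hz = 0 ↔ z ∈ I ^ (n + 1) := by
  constructor
  · intro h
    have hm := Ideal.Quotient.eq_zero_iff_mem.mp h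
    have := coeff_mem_of_mem_map hm n
    simpa [Polynomial.coeff_monomial] using this
  · intro h
    rw [pig, Ideal.Quotient.eq_zero_iff_mem]
    rw [pow_succ] at h
    have key : ∀ w ∈ I ^ n * I, w ∈ I ^ n ∧ ∀ (h' : Polynomial.monomial n w ∈ reesAlgebra I),
        (⟨Polynomial.monomial n w, h'⟩ : ↥(reesAlgebra I)) ∈
          Ideal.map (algebraMap A ↥(reesAlgebra I)) I := by
      intro w hw
      refine Submodule.mul_induction_on hw ?_ ?_
      · intro b hb a ha
        refine ⟨Ideal.mul_mem_right a _ hb, fun h' => ?_⟩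
        have : (⟨Polynomial.monomial n (b * a), h'⟩ : ↥(reesAlgebra I)) =
            ⟨Polynomial.monomial n b, reesAlgebra.monomial_mem.mpr hb⟩ *
              algebraMap A ↥(reesAlgebra I) a := by
          apply Subtype.ext
          show Polynomial.monomial n (b * a) = Polynomial.monomial n b * Polynomial.C a
          rw [← Polynomial.monomial_zero_left, Polynomial.monomial_mul_monomial]
          simp
        rw [this]
        exact Ideal.mul_mem_left _ _ (Ideal.mem_map_of_mem _ ha)
      · intro x y hx' hy'
        refine ⟨add_mem hx'.1 hy'.1, fun h' => ?_⟩
        have : (⟨Polynomial.monomial n (x + y), h'⟩ : ↥(reesAlgebra I)) =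
            ⟨Polynomial.monomial n x, reesAlgebra.monomial_mem.mpr hx'.1⟩ +
              ⟨Polynomial.monomial n y, reesAlgebra.monomial_mem.mpr hy'.1⟩ := by
          apply Subtype.ext
          show Polynomial.monomial n (x + y) = Polynomial.monomial n x + Polynomial.monomial n y
          rw [map_add]
        rw [this]
        exact add_mem (hx'.2 _) (hy'.2 _)
    exact (key z h).2 _

/-- `π_n` as an `A`-linear map on `I^n`. -/
noncomputable def pigHom (I : Ideal A) (n : ℕ) : ↥(I ^ n) →ₗ[A] AssocGraded I where
  toFun z := pig I n z.1 z.2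
  map_add' z w := pig_add z.2 w.2
  map_smul' a z := by
    simp only [RingHom.id_apply]
    rw [pig_smul a z.2]
    exact pig_congr rfl rfl _ _

lemma pigHom_apply (I : Ideal A) (n : ℕ) (z : A) (hz : z ∈ I ^ n) :
    pigHom I n ⟨z, hz⟩ = pig I n z hz := rfl


section Avoid

variable {A : Type*} [CommRing A] [IsLocalRing A]

lemma exists_pairwise_unit_sub (hres : Infinite (IsLocalRing.ResidueField A)) (n : ℕ) :
    ∃ f : Fin n → A, ∀ i j, i ≠ j → IsUnit (f i - f j) := by
  classical
  let e := Infinite.natEmbedding (IsLocalRing.ResidueField A)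
  choose f hf using fun i : Fin n => IsLocalRing.residue_surjective (R := A) (e i)
  refine ⟨f, fun i j hij => ?_⟩
  rw [← IsLocalRing.notMem_maximalIdeal]
  intro hmem
  have : IsLocalRing.residue A (f i - f j) = 0 := Ideal.Quotient.eq_zero_iff_mem.mpr hmem
  rw [map_sub, hf, hf, sub_eq_zero] at this
  exact hij (Fin.ext (e.injective (by simpa using this)))

/-- Prime-avoidance-style lemma: if `J` is not contained in any of `Nᵢ ⊔ mJ`,
then some `x ∈ J` avoids all of them. -/
lemma avoidance (hres : Infinite (IsLocalRing.ResidueField A)) (J : Ideal A) :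
    ∀ l : List (Ideal A), (∀ N ∈ l, ¬ J ≤ N ⊔ maximalIdeal A * J) →
    ∃ x ∈ J, ∀ N ∈ l, x ∉ N ⊔ maximalIdeal A * J := by
  intro l
  induction l with
  | nil => exact fun _ => ⟨0, J.zero_mem, by simp⟩
  | cons N l ih =>
    intro hl
    obtain ⟨x, hxJ, hx⟩ := ih fun M hM => hl M (List.mem_cons_of_mem _ hM)
    obtain ⟨y, hyJ, hy⟩ : ∃ y ∈ J, y ∉ N ⊔ maximalIdeal A * J := by
      have := hl N List.mem_cons_self
      rw [SetLike.not_le_iff_exists] at this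
      exact this
    obtain ⟨f, hf⟩ := exists_pairwise_unit_sub hres (l.length + 2)
    -- the candidates x + f i * y; each member of N :: l can capture at most one
    have key : ∀ M ∈ N :: l, ∀ i j : Fin (l.length + 2), i ≠ j →
        x + f i * y ∈ M ⊔ maximalIdeal A * J → x + f j * y ∈ M ⊔ maximalIdeal A * J → False := by
      intro M hM i j hij hi hj
      have hyM : y ∈ M ⊔ maximalIdeal A * J := by
        have hsub : (f i - f j) * y ∈ M ⊔ maximalIdeal A * J := by
          have : (x + f i * y) - (x + f j * y) = (f i - f j) * y := by ring
          rw [← this]; exact sub_mem hi hj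
        obtain ⟨u, hu⟩ := hf i j hij
        have := Ideal.mul_mem_left (M ⊔ maximalIdeal A * J) ((u⁻¹ : Aˣ) : A) hsub
        rwa [← mul_assoc, ← hu, Units.inv_mul, one_mul] at this
      have hxM : x ∈ M ⊔ maximalIdeal A * J := by
        have : x = (x + f i * y) - f i * y := by ring
        rw [this]
        exact sub_mem hi (Ideal.mul_mem_left _ _ hyM)
      rcases List.mem_cons.mp hM with rfl | hM'
      · exact hy hyM
      · exact hx M hM' hxM
    by_contra hcon
    push_neg at hcon
    have hforall : ∀ i : Fin (l.length + 2), ∃ M ∈ N :: l, x + f i * y ∈ M ⊔ maximalIdeal A * J := by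
      intro i
      obtain ⟨M, hM1, hM2⟩ := hcon (x + f i * y) (add_mem hxJ (Ideal.mul_mem_left _ _ hyJ))
      exact ⟨M, hM1, hM2⟩
    choose M hM1 hM2 using hforall
    -- index the chosen M's in the list
    have hidx : ∀ i, ∃ k : Fin (N :: l).length, (N :: l).get k = M i := by
      intro i
      obtain ⟨k, hk, he⟩ := List.mem_iff_getElem.mp (hM1 i)
      exact ⟨⟨k, hk⟩, he⟩
    choose g hg using hidx
    obtain ⟨i, j, hij, hgij⟩ := Fintype.exists_ne_map_eq_of_card_lt g (by simp)
    have hMij : M i = M j := by rw [← hg i, ← hg j, hgij]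
    exact key (M i) (hM1 i) i j hij (hM2 i) (hMij ▸ hM2 j)


end Avoid

section Core

variable {A : Type*} [CommRing A]

lemma pig_one (I : Ideal A) : pig I 0 1 (by simp) = 1 := by
  rw [pig_zero, map_one]

lemma pig_pow {I : Ideal A} {z : A} (hz : z ∈ I ^ 1) (k : ℕ) :
    (pig I 1 z hz) ^ k = pig I k (z ^ k) (by
      rw [pow_one] at hz; exact Ideal.pow_mem_pow hz k) := by
  induction k with
  | zero =>
    rw [pow_zero]
    have h1 : (1:A) ∈ I ^ 0 := by simp
    exact ((pig_congr rfl (pow_zero z) _ h1).trans (pig_one I)).symm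
  | succ k ih =>
    rw [pow_succ, ih, pig_mul]
    exact pig_congr rfl (by rw [pow_succ]) _ _

lemma red_pow {I J : Ideal A} {r : ℕ} (hred : J * I ^ r = I ^ (r + 1)) :
    ∀ n : ℕ, J * I ^ (r + n) = I ^ (r + 1 + n) := by
  intro n
  induction n with
  | zero => rw [Nat.add_zero, Nat.add_zero]; exact hred
  | succ n ih =>
    have e1 : r + (n + 1) = (r + n) + 1 := by omega
    have e2 : r + 1 + (n + 1) = (r + 1 + n) + 1 := by omega
    rw [e1, e2, pow_succ, pow_succ, ← mul_assoc, ih]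

/-- The "bad locus" ideal associated to a primary component `Q`. -/
noncomputable def NQ (I : Ideal A) (Q : Ideal (AssocGraded I)) : Ideal A :=
  Submodule.map (I ^ 1).subtype
    (Submodule.comap (pigHom I 1) (Submodule.restrictScalars A Q.radical))

lemma mem_NQ {I : Ideal A} {Q : Ideal (AssocGraded I)} {a : A} :
    a ∈ NQ I Q ↔ ∃ h : a ∈ I ^ 1, pig I 1 a h ∈ Q.radical := by
  constructor
  · rintro ⟨⟨z, hz⟩, hmem, rfl⟩
    exact ⟨hz, hmem⟩
  · rintro ⟨h, hmem⟩
    exact ⟨⟨a, h⟩, hmem, rfl⟩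

/-- irrelevance: all degree-one initial forms lie in the radical of `Q`. -/
def Rel (I : Ideal A) (Q : Ideal (AssocGraded I)) : Prop :=
  ∀ a : A, ∀ h : a ∈ I ^ 1, pig I 1 a h ∈ Q.radical

section Noeth
variable [IsNoetherianRing A]

/-- Claim A: irrelevant primary components contain everything of high degree. -/
lemma high_degree_mem {I : Ideal A} {Q : Ideal (AssocGraded I)}
    (hrel : Rel I Q) : ∃ k : ℕ, ∀ m : ℕ, k ≤ m → ∀ z : A, ∀ hz : z ∈ I ^ m,
      pig I m z hz ∈ Q := by
  set T : Ideal (AssocGraded I) :=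
    Ideal.span {g | ∃ a : A, ∃ h : a ∈ I ^ 1, g = pig I 1 a h} with hT
  have hTrad : T ≤ Q.radical := by
    rw [hT, Ideal.span_le]
    rintro g ⟨a, h, rfl⟩
    exact hrel a h
  have hTfg : T.FG := IsNoetherian.noetherian T
  obtain ⟨k, hk⟩ := Ideal.exists_pow_le_of_le_radical_of_fg hTrad hTfg
  have key : ∀ m : ℕ, ∀ z : A, ∀ hz : z ∈ I ^ m, pig I m z hz ∈ T ^ m := by
    intro m
    induction m with
    | zero => intro z hz; simp
    | succ m ih =>
      intro z hz
      have hz' : z ∈ I ^ m * I := by rwa [← pow_succ]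
      have conj : z ∈ I ^ (m + 1) ∧ ∀ h : z ∈ I ^ (m + 1), pig I (m+1) z h ∈ T ^ (m + 1) := by
        refine Submodule.mul_induction_on hz' ?_ ?_
        · intro b hb a ha
          have hmem : b * a ∈ I ^ (m + 1) := by
            rw [pow_succ]; exact Ideal.mul_mem_mul hb ha
          refine ⟨hmem, fun h => ?_⟩
          have ha1 : a ∈ I ^ 1 := by rwa [pow_one]
          have : pig I (m+1) (b*a) h = pig I m b hb * pig I 1 a ha1 := by
            rw [pig_mul]
          rw [this, pow_succ]
          exact Ideal.mul_mem_mul (ih b hb) (Ideal.subset_span ⟨a, ha1, rfl⟩)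
        · intro x y hx hy
          refine ⟨add_mem hx.1 hy.1, fun h => ?_⟩
          have : pig I (m+1) (x+y) h = pig I (m+1) x hx.1 + pig I (m+1) y hy.1 :=
            pig_add hx.1 hy.1
          rw [this]
          exact add_mem (hx.2 _) (hy.2 _)
      exact conj.2 hz
  refine ⟨k, fun m hm z hz => ?_⟩
  exact hk (Ideal.pow_le_pow_right hm (key m z hz))

/-- Claim C: if `J` (a reduction) is inside `NQ Q ⊔ mJ` then `Q` is irrelevant. -/
lemma properness [IsLocalRing A] {I J : Ideal A} {r : ℕ}
    (hJI : J ≤ I) (hred : J * I ^ r = I ^ (r + 1))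
    {Q : Ideal (AssocGraded I)} (hQ : Q.IsPrimary)
    (hle : J ≤ NQ I Q ⊔ maximalIdeal A * J) : Rel I Q := by
  have hpow : ∀ n : ℕ, ∀ z : A, ∀ hz : z ∈ I ^ (r + 1 + n),
      pig I (r+1+n) z hz ∈ Q.radical := by
    intro n
    set Dn : Submodule A (AssocGraded I) := LinearMap.range (pigHom I (r+1+n)) with hDn
    have hD : Dn ≤ Submodule.restrictScalars A Q.radical ⊔ maximalIdeal A • Dn := by
      rintro g ⟨⟨z, hz⟩, rfl⟩
      rw [pigHom_apply]
      have hz' : z ∈ J * I ^ (r + n) := by rw [red_pow hred n]; exact hz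
      have conj : z ∈ I ^ (r+1+n) ∧ ∀ h : z ∈ I ^ (r+1+n),
          pig I (r+1+n) z h ∈ Submodule.restrictScalars A Q.radical ⊔ maximalIdeal A • Dn := by
        refine Submodule.mul_induction_on hz' ?_ ?_
        · intro j hj b hb
          have hj1 : j ∈ I ^ 1 := by rw [pow_one]; exact hJI hj
          have hmem : j * b ∈ I ^ (r+1+n) := by
            have := Ideal.mul_mem_mul hj1 hb
            rwa [← pow_add, show 1 + (r + n) = r + 1 + n by omega] at this
          refine ⟨hmem, fun h => ?_⟩
          obtain ⟨v, hv, w, hw, hvw⟩ := Submodule.mem_sup.mp (hle hj)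
          obtain ⟨hv1, hvQ⟩ := mem_NQ.mp hv
          have hwJ : w ∈ J := Ideal.mul_le_right hw
          have hw1 : w ∈ I ^ 1 := by rw [pow_one]; exact hJI hwJ
          have hsplit : pig I (r+1+n) (j*b) h =
              pig I 1 v hv1 * pig I (r+n) b hb + pig I 1 w hw1 * pig I (r+n) b hb := by
            rw [pig_mul hv1 hb, pig_mul hw1 hb, ← pig_add]
            exact pig_congr (by omega) (by rw [← hvw]; ring) _ _
          rw [hsplit]
          refine add_mem (Submodule.mem_sup_left ?_) (Submodule.mem_sup_right ?_)
          · exact Ideal.mul_mem_right _ _ hvQ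
          · have conj2 : w ∈ I ^ 1 ∧ ∀ hw1 : w ∈ I ^ 1,
                pig I 1 w hw1 * pig I (r+n) b hb ∈ maximalIdeal A • Dn := by
              refine Submodule.mul_induction_on hw ?_ ?_
              · intro a ha j' hj'
                have hj'I : j' ∈ I ^ 1 := by rw [pow_one]; exact hJI hj'
                have haj' : a * j' ∈ I ^ 1 := Ideal.mul_mem_left _ a hj'I
                refine ⟨haj', fun hw1 => ?_⟩
                have hstep : a • (pig I 1 j' hj'I * pig I (r+n) b hb) =
                    pig I 1 (a*j') hw1 * pig I (r+n) b hb := by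
                  rw [← smul_mul_assoc]
                  congr 1
                  exact pig_smul a hj'I
                rw [← hstep]
                refine Submodule.smul_mem_smul ha ?_
                rw [pig_mul hj'I hb]
                refine ⟨⟨j' * b, ?_⟩, ?_⟩
                · have := Ideal.mul_mem_mul hj'I hb
                  rwa [← pow_add, show 1 + (r + n) = r + 1 + n by omega] at this
                · rw [pigHom_apply]
                  exact pig_congr (by omega) rfl _ _
              · intro x y hx hy
                refine ⟨add_mem hx.1 hy.1, fun hw1 => ?_⟩
                have : pig I 1 (x+y) hw1 * pig I (r+n) b hb =
                    pig I 1 x hx.1 * pig I (r+n) b hb + pig I 1 y hy.1 * pig I (r+n) b hb := by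
                  rw [← add_mul]
                  congr 1
                  exact pig_add hx.1 hy.1
                rw [this]
                exact add_mem (hx.2 _) (hy.2 _)
            exact conj2.2 hw1
        · intro x y hx hy
          refine ⟨add_mem hx.1 hy.1, fun h => ?_⟩
          have : pig I (r+1+n) (x+y) h = pig I (r+1+n) x hx.1 + pig I (r+1+n) y hy.1 :=
            pig_add hx.1 hy.1
          rw [this]
          exact add_mem (hx.2 _) (hy.2 _)
      exact conj.2 hz
    have hfg : Dn.FG := by
      rw [hDn, LinearMap.range_eq_map]
      exact Submodule.FG.map _ ((Submodule.fg_top _).mpr (IsNoetherian.noetherian _))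
    set ρ := (Submodule.restrictScalars A (Q.radical : Ideal (AssocGraded I))).mkQ with hρ
    have hker : Submodule.map ρ (Submodule.restrictScalars A (Q.radical : Ideal (AssocGraded I))) = ⊥ := by
      rw [eq_bot_iff, Submodule.map_le_iff_le_comap]
      intro u hu
      simp only [Submodule.mem_comap, hρ, Submodule.mkQ_apply, Submodule.mem_bot,
        Submodule.Quotient.mk_eq_zero]
      exact hu
    have hN : (Dn.map ρ) ≤ maximalIdeal A • (Dn.map ρ) := by
      have hmono := Submodule.map_mono (f := ρ) hD
      rwa [Submodule.map_sup, Submodule.map_smul'', hker, bot_sup_eq] at hmono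
    have hjac : maximalIdeal A ≤ (⊥ : Ideal A).jacobson := by
      rw [IsLocalRing.jacobson_eq_maximalIdeal ⊥ bot_ne_top]
    have hbot := Submodule.eq_bot_of_le_smul_of_le_jacobson_bot (maximalIdeal A) _
      (hfg.map ρ) hN hjac
    intro z hz
    have hmem : pig I (r+1+n) z hz ∈ Dn := ⟨⟨z, hz⟩, rfl⟩
    have : ρ (pig I (r+1+n) z hz) = 0 := by
      have h2 : ρ (pig I (r+1+n) z hz) ∈ Dn.map ρ := Submodule.mem_map_of_mem hmem
      rw [hbot] at h2
      exact h2
    rwa [hρ, Submodule.mkQ_apply, Submodule.Quotient.mk_eq_zero] at this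
  intro a ha
  have hpowmem : a ^ (r+1) ∈ I ^ (r+1) := by
    rw [pow_one] at ha
    exact Ideal.pow_mem_pow ha (r+1)
  have hp : (pig I 1 a ha) ^ (r+1) ∈ Q.radical := by
    rw [pig_pow ha (r+1)]
    exact hpow 0 (a^(r+1)) hpowmem
  exact (Ideal.isPrime_radical hQ).mem_of_pow_mem _ hp

/-- Main existence result: a superficial element inside a reduction `J`, outside `mJ`. -/
lemma exists_superficial [IsLocalRing A] [IsNoetherianRing A]
    (hres : Infinite (IsLocalRing.ResidueField A)) {I J : Ideal A} {r : ℕ}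
    (hJI : J ≤ I) (hred : J * I ^ r = I ^ (r+1)) (hJbot : J ≠ ⊥) :
    ∃ x ∈ J, x ∉ maximalIdeal A * J ∧ IsSuperficial I x := by
  classical
  obtain ⟨s, hsinf, hsprim⟩ := Submodule.isLasker (AssocGraded I) (AssocGraded I) ⊥
  have hbound : ∀ Q : Ideal (AssocGraded I), ∃ k, Q ∈ s → Rel I Q →
      ∀ m, k ≤ m → ∀ z, ∀ hz : z ∈ I ^ m, pig I m z hz ∈ Q := by
    intro Q
    by_cases h : Q ∈ s ∧ Rel I Q
    · obtain ⟨k, hk⟩ := high_degree_mem h.2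
      exact ⟨k, fun _ _ => hk⟩
    · exact ⟨0, fun h1 h2 => absurd ⟨h1, h2⟩ h⟩
  choose kk hkk using hbound
  set c := s.sup kk with hc
  set l : List (Ideal A) := ⊥ :: (s.filter fun Q => ¬ Rel I Q).toList.map (NQ I) with hl
  have hlist : ∀ N ∈ l, ¬ J ≤ N ⊔ maximalIdeal A * J := by
    intro N hN
    rcases List.mem_cons.mp hN with rfl | hN'
    · rw [bot_sup_eq]
      intro habs
      apply hJbot
      refine Submodule.eq_bot_of_le_smul_of_le_jacobson_bot (maximalIdeal A) J
        (IsNoetherian.noetherian J) ?_ ?_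
      · rwa [Ideal.smul_eq_mul]
      · rw [IsLocalRing.jacobson_eq_maximalIdeal ⊥ bot_ne_top]
    · obtain ⟨Q, hQmem, rfl⟩ := List.mem_map.mp hN'
      have hQs : Q ∈ s ∧ ¬ Rel I Q := by
        have := Finset.mem_toList.mp hQmem
        exact Finset.mem_filter.mp this
      intro habs
      exact hQs.2 (properness hJI hred (hsprim hQs.1) habs)
  obtain ⟨x, hxJ, hx⟩ := avoidance hres J l hlist
  have hxm : x ∉ maximalIdeal A * J := fun h =>
    hx ⊥ List.mem_cons_self (by rwa [bot_sup_eq])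
  have hx1 : x ∈ I ^ 1 := by rw [pow_one]; exact hJI hxJ
  refine ⟨x, hxJ, hxm, c, ?_⟩
  intro n hn
  apply le_antisymm
  · rintro z hz
    obtain ⟨hzc, hzI⟩ := Submodule.mem_inf.mp hz
    have hzx : z * x ∈ I ^ n := Submodule.mem_colon_span_singleton.mp hzc
    have climb : ∀ j : ℕ, c + j ≤ n - 1 → z ∈ I ^ (c + j) := by
      intro j
      induction j with
      | zero => intro _; simpa using hzI
      | succ j ih =>
        intro hj
        have hzm : z ∈ I ^ (c + j) := ih (by omega)
        by_contra hns
        have hnsm : z ∉ I ^ ((c + j) + 1) := hns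
        have hzeta : pig I (c+j) z hzm ≠ 0 := fun h0 =>
          hnsm ((pig_eq_zero_iff hzm).mp h0)
        obtain ⟨Q, hQ, hzetaQ⟩ : ∃ Q ∈ s, pig I (c+j) z hzm ∉ Q := by
          by_contra hall
          push_neg at hall
          refine hzeta ?_
          have hmem : pig I (c+j) z hzm ∈ s.inf id :=
            Submodule.mem_finsetInf.mpr (fun Q hQ => hall Q hQ)
          rwa [hsinf, Ideal.mem_bot] at hmem
        have hprod : pig I (c+j) z hzm * pig I 1 x hx1 = 0 := by
          rw [pig_mul hzm hx1, pig_eq_zero_iff]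
          exact Ideal.pow_le_pow_right (by omega) hzx
        have hcase := (Ideal.isPrimary_iff.mp (hsprim hQ)).2
          (show pig I (c+j) z hzm * pig I 1 x hx1 ∈ Q by rw [hprod]; exact Q.zero_mem)
        rcases hcase with hc1 | hc2
        · exact hzetaQ hc1
        · by_cases hrel : Rel I Q
          · exact hzetaQ (hkk Q hQ hrel (c+j)
              (le_trans (Finset.le_sup hQ) (by omega)) z hzm)
          · refine hx (NQ I Q) ?_ (Submodule.mem_sup_left (mem_NQ.mpr ⟨hx1, hc2⟩))
            exact List.mem_cons_of_mem _ (List.mem_map.mpr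
              ⟨Q, Finset.mem_toList.mpr (Finset.mem_filter.mpr ⟨hQ, hrel⟩), rfl⟩)
    have hfin := climb (n - 1 - c) (by omega)
    rwa [show c + (n-1-c) = n - 1 by omega] at hfin
  · intro w hw
    refine Submodule.mem_inf.mpr ⟨?_, ?_⟩
    · rw [Submodule.mem_colon_span_singleton, smul_eq_mul]
      have := Ideal.mul_mem_mul hw hx1
      rwa [← pow_add, show (n-1) + 1 = n by omega] at this
    · exact Ideal.pow_le_pow_right (by omega) hw

end Noeth


end Core

section Quot

variable {A : Type*} [CommRing A]

lemma red_pow' {I J : Ideal A} {r : ℕ} (hred : J * I ^ r = I ^ (r + 1)) :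
    ∀ n : ℕ, r ≤ n → J * I ^ n = I ^ (n + 1) := by
  have aux : ∀ m : ℕ, J * I ^ (r + m) = I ^ (r + m + 1) := by
    intro m
    induction m with
    | zero => simpa using hred
    | succ m ih =>
      have e1 : r + (m + 1) = (r + m) + 1 := by omega
      rw [e1, pow_succ, ← mul_assoc, ih, ← pow_succ]
  intro n hn
  have := aux (n - r)
  rwa [show r + (n - r) = n by omega] at this

/-- Artin-Rees consequence: for large `n`, `(I^(n+1) : x) ⊆ I^n + (0 : x)`. -/
lemma colon_decomp [IsNoetherianRing A] {I : Ideal A} {x : A}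
    (hx : x ∈ I) (hsup : IsSuperficial I x) :
    ∃ c2 : ℕ, ∀ n, c2 ≤ n → ∀ a : A, a * x ∈ I ^ (n + 1) →
      ∃ b e : A, b ∈ I ^ n ∧ e * x = 0 ∧ a = b + e := by
  obtain ⟨c, hc⟩ := hsup
  obtain ⟨k, hk⟩ := Ideal.exists_pow_inf_eq_pow_smul I (Ideal.span {x} : Ideal A)
  refine ⟨k + c + 1, fun n hn a ha => ?_⟩
  have hmem : a * x ∈ I ^ (n + 1) ⊓ Ideal.span {x} := by
    refine Submodule.mem_inf.mpr ⟨ha, Ideal.mem_span_singleton'.mpr ⟨a, rfl⟩⟩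
  have hAR := hk (n + 1) (by omega)
  have htop : ∀ m : ℕ, (I ^ m • (⊤ : Submodule A A) : Submodule A A) = I ^ m := by
    intro m
    rw [Ideal.smul_eq_mul, Ideal.mul_top]
  rw [htop, htop] at hAR
  rw [hAR] at hmem
  have hle : (I ^ (n + 1 - k) • (I ^ k ⊓ Ideal.span {x} : Ideal A) : Ideal A)
      ≤ Ideal.span {x} * I ^ (n + 1 - k) := by
    rw [Ideal.smul_eq_mul, mul_comm]
    exact Ideal.mul_mono inf_le_right le_rfl
  obtain ⟨b, hb, hbx⟩ := Ideal.mem_span_singleton_mul.mp (hle hmem)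
  -- x * b = a * x
  have hbn : b ∈ I ^ n := by
    have hb1 : b ∈ I ^ c := Ideal.pow_le_pow_right (by omega) hb
    have hb2 : b ∈ (I ^ (n+1)).colon (Ideal.span {x}) := by
      rw [Submodule.mem_colon_span_singleton, smul_eq_mul, mul_comm]
      rw [hbx]
      exact ha
    have := hc (n + 1) (by omega)
    have hmem2 : b ∈ (I ^ (n+1)).colon (Ideal.span {x}) ⊓ I ^ c :=
      Submodule.mem_inf.mpr ⟨hb2, hb1⟩
    rw [this] at hmem2
    simpa using hmem2
  refine ⟨b, a - b, hbn, ?_, by ring⟩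
  have : (a - b) * x = a * x - b * x := by ring
  rw [this, ← hbx, mul_comm b x, sub_self]

/-- superficial elements can be modded out: minimal reductions pass to the quotient. -/
lemma minimalReduction_map [IsNoetherianRing A] {I J : Ideal A} {x : A}
    (hxJ : x ∈ J) (hmin : IsMinimalReduction J I) (hsup : IsSuperficial I x) :
    IsMinimalReduction (J.map (Ideal.Quotient.mk (Ideal.span {x})))
      (I.map (Ideal.Quotient.mk (Ideal.span {x}))) := by
  obtain ⟨⟨hJI, r, hred⟩, hminimal⟩ := hmin
  set mk := Ideal.Quotient.mk (Ideal.span {x}) with hmk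
  have hsurj : Function.Surjective mk := Ideal.Quotient.mk_surjective
  constructor
  · refine ⟨Ideal.map_mono hJI, r, ?_⟩
    rw [← Ideal.map_pow, ← Ideal.map_mul, hred, Ideal.map_pow]
  · intro Kb hKb hKbred
    set K : Ideal A := Ideal.comap mk Kb ⊓ J with hK
    have hxK : x ∈ K := by
      refine Submodule.mem_inf.mpr ⟨?_, hxJ⟩
      show mk x ∈ Kb
      have : mk x = 0 := Ideal.Quotient.eq_zero_iff_mem.mpr (Ideal.subset_span rfl)
      rw [this]; exact Kb.zero_mem
    have hmapK : K.map mk = Kb := by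
      apply le_antisymm
      · calc K.map mk ≤ (Ideal.comap mk Kb).map mk := Ideal.map_mono inf_le_left
          _ = Kb := Ideal.map_comap_of_surjective mk hsurj Kb
      · intro u hu
        obtain ⟨j, hj, rfl⟩ := Ideal.mem_map_iff_of_surjective mk hsurj |>.mp (hKb hu)
        exact Ideal.mem_map_of_mem mk (Submodule.mem_inf.mpr ⟨hu, hj⟩)
    obtain ⟨hKbI, n, hKbred'⟩ := hKbred
    obtain ⟨c2, hc2⟩ := colon_decomp (hJI hxJ) hsup
    set M := n + c2 with hM
    have hqred : Kb * (I.map mk) ^ M = (I.map mk) ^ (M + 1) :=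
      red_pow' hKbred' M (by omega)
    have hKI : K ≤ I := le_trans inf_le_right hJI
    have hpull : I ^ (M + 1) ≤ K * I ^ M ⊔ Ideal.span {x} := by
      have h1 : (I ^ (M+1)).map mk = (K * I ^ M).map mk := by
        rw [Ideal.map_pow, ← hqred, Ideal.map_mul, hmapK, Ideal.map_pow]
      have h2 : I ^ (M+1) ≤ Ideal.comap mk ((I ^ (M+1)).map mk) := Ideal.le_comap_map
      rw [h1, Ideal.comap_map_of_surjective mk hsurj] at h2
      have h3 : Ideal.comap mk ⊥ = Ideal.span {x} := by
        rw [← RingHom.ker_eq_comap_bot, hmk, Ideal.mk_ker]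
      rwa [h3] at h2
    have hfinal : K * I ^ M = I ^ (M + 1) := by
      apply le_antisymm
      · calc K * I ^ M ≤ I * I ^ M := Ideal.mul_mono hKI le_rfl
          _ = I ^ (M + 1) := (pow_succ' I M).symm
      · intro u hu
        obtain ⟨v, hv, w, hw, hvw⟩ := Submodule.mem_sup.mp (hpull hu)
        obtain ⟨a, rfl⟩ := Ideal.mem_span_singleton'.mp hw
        have hvI : v ∈ I ^ (M + 1) := by
          have : K * I ^ M ≤ I ^ (M + 1) := by
            calc K * I ^ M ≤ I * I ^ M := Ideal.mul_mono hKI le_rfl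
              _ = I ^ (M + 1) := (pow_succ' I M).symm
          exact this hv
        have hax : a * x ∈ I ^ (M + 1) := by
          have : a * x = u - v := by rw [← hvw]; ring
          rw [this]
          exact sub_mem hu hvI
        obtain ⟨b, e, hb, he, hae⟩ := hc2 M (by omega) a hax
        have : u = v + b * x := by
          rw [← hvw, hae]
          have : (b + e) * x = b * x + e * x := by ring
          rw [this, he, add_zero]
        rw [this]
        refine add_mem hv ?_
        have hbx2 := Ideal.mul_mem_mul hxK hb
        rwa [mul_comm x b] at hbx2
    have hKred : IsReduction K I := ⟨hKI, M, hfinal⟩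
    rw [← hmapK, hminimal K inf_le_right hKred]


end Quot

section Main

universe u

lemma ideal_span_insert_zero {R : Type u} [CommRing R] (s : Set R) :
    Ideal.span (insert 0 s) = Ideal.span s := Submodule.span_insert_zero

/-- In the presence of nilpotency every list from `I` is a superficial sequence. -/
lemma trivial_seq : ∀ (n : ℕ) {A : Type u} [CommRing A] (I : Ideal A) (k : ℕ),
    I ^ k = ⊥ → ∀ l : List A, l.length ≤ n → (∀ y ∈ l, y ∈ I) → IsSuperficialSeq I l := by
  intro n
  induction n with
  | zero =>
    intro A _ I k hk l hl _
    rw [List.length_eq_zero_iff.mp (le_antisymm hl (Nat.zero_le _))]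
    rw [IsSuperficialSeq]
    trivial
  | succ n ih =>
    intro A _ I k hk l hlen hmem
    cases l with
    | nil => rw [IsSuperficialSeq]; trivial
    | cons y t =>
      rw [IsSuperficialSeq]
      refine ⟨hmem y List.mem_cons_self, ⟨k, fun m hm => ?_⟩, ?_⟩
      · have h1 : I ^ (m-1) = ⊥ := by
          rw [eq_bot_iff, ← hk]
          exact Ideal.pow_le_pow_right (by omega)
        rw [h1, hk, inf_bot_eq]
      · apply ih (I.map (Ideal.Quotient.mk (Ideal.span {y}))) k
        · rw [← Ideal.map_pow, hk, Ideal.map_bot]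
        · rw [List.length_map]
          simpa using Nat.le_of_succ_le_succ hlen
        · intro u hu
          obtain ⟨y', hy', rfl⟩ := List.mem_map.mp hu
          exact Ideal.mem_map_of_mem _ (hmem y' (List.mem_cons_of_mem _ hy'))

/-- Infinitude of the residue field passes to quotients. -/
lemma res_inf {A : Type u} [CommRing A] [IsLocalRing A]
    (hres : Infinite (IsLocalRing.ResidueField A)) (x : A) (hx : x ∈ maximalIdeal A)
    [IsLocalRing (A ⧸ Ideal.span {x})] :
    Infinite (IsLocalRing.ResidueField (A ⧸ Ideal.span {x})) := by
  have hle : Ideal.span {x} ≤ maximalIdeal A := by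
    rwa [Ideal.span_le, Set.singleton_subset_iff]
  let ψ : (A ⧸ Ideal.span {x}) →+* IsLocalRing.ResidueField A :=
    Ideal.Quotient.lift _ (IsLocalRing.residue A)
      (fun a ha => Ideal.Quotient.eq_zero_iff_mem.mpr (hle ha))
  have hψs : Function.Surjective ψ := by
    intro y
    obtain ⟨a, rfl⟩ := IsLocalRing.residue_surjective (R := A) y
    exact ⟨Ideal.Quotient.mk _ a, rfl⟩
  have hker : RingHom.ker ψ = maximalIdeal (A ⧸ Ideal.span {x}) :=
    IsLocalRing.eq_maximalIdeal (RingHom.ker_isMaximal_of_surjective ψ hψs)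
  let φ : IsLocalRing.ResidueField (A ⧸ Ideal.span {x}) →+* IsLocalRing.ResidueField A :=
    Ideal.Quotient.lift _ ψ (fun b hb => by rw [← hker] at hb; exact hb)
  have hφs : Function.Surjective φ := by
    intro y
    obtain ⟨b, rfl⟩ := hψs y
    exact ⟨Ideal.Quotient.mk _ b, rfl⟩
  exact Infinite.of_surjective φ hφs

/-- `m`-primariness passes to the quotient. -/
lemma radical_map_quot {A : Type u} [CommRing A] [IsLocalRing A] {I : Ideal A}
    (hI : I.radical = maximalIdeal A) {x : A} (hxI : x ∈ I)
    [IsLocalRing (A ⧸ Ideal.span {x})] :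
    (I.map (Ideal.Quotient.mk (Ideal.span {x}))).radical
      = maximalIdeal (A ⧸ Ideal.span {x}) := by
  set mk := Ideal.Quotient.mk (Ideal.span {x}) with hmk
  have hsurj : Function.Surjective mk := Ideal.Quotient.mk_surjective
  have hIm : I ≤ maximalIdeal A := hI ▸ Ideal.le_radical
  have hsub : Ideal.comap mk ⊥ = Ideal.span {x} := by
    rw [← RingHom.ker_eq_comap_bot, hmk, Ideal.mk_ker]
  apply le_antisymm
  · apply IsLocalRing.le_maximalIdeal
    rw [Ne, Ideal.radical_eq_top]
    intro htop
    have hcom := congrArg (Ideal.comap mk) htop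
    rw [Ideal.comap_map_of_surjective mk hsurj, Ideal.comap_top, hsub,
      sup_eq_left.mpr (by rwa [Ideal.span_le, Set.singleton_subset_iff])] at hcom
    rw [hcom] at hIm
    exact (Ideal.IsMaximal.ne_top (IsLocalRing.maximalIdeal.isMaximal A))
      (top_le_iff.mp hIm)
  · intro u hu
    obtain ⟨a, rfl⟩ := hsurj u
    have ham : a ∈ maximalIdeal A := by
      have hcm : Ideal.comap mk (maximalIdeal (A ⧸ Ideal.span {x})) = maximalIdeal A :=
        IsLocalRing.eq_maximalIdeal (Ideal.comap_isMaximal_of_surjective mk hsurj)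
      rw [← hcm]; exact hu
    rw [← hI] at ham
    obtain ⟨k, hk⟩ := Ideal.mem_radical_iff.mp ham
    exact Ideal.mem_radical_iff.mpr ⟨k, by rw [← map_pow]; exact Ideal.mem_map_of_mem mk hk⟩

/-- exchange: remove a generator in favor of `x ∉ mJ`. -/
lemma exchange {A : Type u} [CommRing A] [IsLocalRing A] {J : Ideal A} {s : Finset A}
    (hspan : Ideal.span ↑s = J) {x : A} (hxJ : x ∈ J)
    (hxm : x ∉ maximalIdeal A * J) :
    ∃ t : Finset A, ↑t ⊆ (J : Set A) ∧ t.card < s.card ∧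
      Ideal.span (insert x ↑t) = J := by
  classical
  have hsJ : ∀ y ∈ s, y ∈ J := fun y hy => hspan ▸ Ideal.subset_span hy
  obtain ⟨f, -, hf⟩ := Submodule.mem_span_finset.mp (show x ∈ Submodule.span A (↑s : Set A) by
    rw [show Submodule.span A (↑s : Set A) = Ideal.span ↑s from rfl, hspan]; exact hxJ)
  have hexists : ∃ y ∈ s, f y ∉ maximalIdeal A := by
    by_contra hall
    push_neg at hall
    apply hxm
    rw [← hf]
    refine Submodule.sum_mem _ (fun y hy => ?_)
    have : f y • y = f y * y := rfl
    rw [this]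
    exact Ideal.mul_mem_mul (hall y hy) (hsJ y hy)
  obtain ⟨y, hys, hfy⟩ := hexists
  refine ⟨s.erase y, ?_, ?_, ?_⟩
  · intro z hz
    exact hsJ z (Finset.mem_of_mem_erase (Finset.mem_coe.mp hz))
  · rw [Finset.card_erase_of_mem hys]
    have : 0 < s.card := Finset.card_pos.mpr ⟨y, hys⟩
    omega
  · apply le_antisymm
    · rw [Ideal.span_le]
      intro z hz
      rcases Set.mem_insert_iff.mp hz with rfl | hz'
      · exact hxJ
      · exact hsJ z (Finset.mem_of_mem_erase (Finset.mem_coe.mp hz'))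
    · rw [← hspan, Ideal.span_le]
      intro z hzs
      by_cases hzy : z = y
      · subst hzy
        -- z = y case
        have hsum : ∑ i ∈ s.erase z, f i • i + f z • z = ∑ i ∈ s, f i • i :=
          Finset.sum_erase_add s _ hzs
        have h5 : f z * z ∈ Ideal.span (insert x ↑(s.erase z)) := by
          have heq : f z * z = x - ∑ i ∈ s.erase z, f i • i := by
            rw [← hf, ← hsum]; simp [smul_eq_mul]
          rw [heq]
          refine sub_mem (Ideal.subset_span (Set.mem_insert _ _)) ?_
          refine Submodule.sum_mem _ (fun i hi => ?_)
          have : f i • i = f i * i := rfl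
          rw [this]
          exact Ideal.mul_mem_left _ _
            (Ideal.subset_span (Set.mem_insert_of_mem _ (Finset.mem_coe.mpr hi)))
        exact (Ideal.unit_mul_mem_iff_mem _ (IsLocalRing.notMem_maximalIdeal.mp hfy)).mp h5
      · exact Ideal.subset_span (Set.mem_insert_of_mem _ (Finset.mem_coe.mpr (Finset.mem_erase.mpr ⟨hzy, hzs⟩)))

/-- The main induction on the number of generators. -/
lemma main : ∀ (n : ℕ) {A : Type u} [CommRing A] [IsLocalRing A] [IsNoetherianRing A]
    (I J : Ideal A), Infinite (IsLocalRing.ResidueField A) → I.radical = maximalIdeal A →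
    IsMinimalReduction J I → ∀ s : Finset A, Ideal.span ↑s = J → s.card ≤ n →
    ∃ xs : List A, IsSuperficialSeq I xs ∧ Ideal.span {x | x ∈ xs} = J := by
  intro n
  induction n with
  | zero =>
    intro A _ _ _ I J hres hI hJ s hspan hcard
    have hs : s = ∅ := Finset.card_eq_zero.mp (le_antisymm hcard (Nat.zero_le _))
    refine ⟨[], by rw [IsSuperficialSeq]; trivial, ?_⟩
    rw [show {x : A | x ∈ ([] : List A)} = (∅ : Set A) by ext; simp]
    rw [Ideal.span_empty, ← hspan, hs]
    simp
  | succ n ih =>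
    intro A _ _ _ I J hres hI hJ s hspan hcard
    by_cases hnil : ∃ k, I ^ k = ⊥
    · obtain ⟨k, hk⟩ := hnil
      refine ⟨s.toList, trivial_seq s.toList.length I k hk s.toList le_rfl ?_, ?_⟩
      · intro y hy
        exact hJ.1.1 (hspan ▸ Ideal.subset_span (by simpa using hy))
      · rw [show {x : A | x ∈ s.toList} = (↑s : Set A) by ext; simp]
        exact hspan
    · classical
      push_neg at hnil
      have hJbot : J ≠ ⊥ := by
        rintro rfl
        obtain ⟨_, r, hred⟩ := hJ.1
        have hb : (⊥ : Ideal A) * I ^ r = ⊥ := by simp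
        rw [hb] at hred
        exact hnil (r+1) hred.symm
      obtain ⟨r, hred⟩ := hJ.1.2
      obtain ⟨x, hxJ, hxm, hsup⟩ := exists_superficial hres hJ.1.1 hred hJbot
      obtain ⟨t, htJ, hcard', hspan'⟩ := exchange hspan hxJ hxm
      set mk := Ideal.Quotient.mk (Ideal.span {x}) with hmk
      have hsurj : Function.Surjective mk := Ideal.Quotient.mk_surjective
      have hxI : x ∈ I := hJ.1.1 hxJ
      have hxmax : x ∈ maximalIdeal A := by rw [← hI]; exact Ideal.le_radical hxI
      have hlem : Ideal.span {x} ≤ maximalIdeal A := by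
        rwa [Ideal.span_le, Set.singleton_subset_iff]
      have hne : Ideal.span {x} ≠ ⊤ := by
        intro h
        exact (Ideal.IsMaximal.ne_top (IsLocalRing.maximalIdeal.isMaximal A))
          (top_le_iff.mp (h ▸ hlem))
      haveI : Nontrivial (A ⧸ Ideal.span {x}) := Ideal.Quotient.nontrivial_iff.mpr hne
      haveI : IsLocalRing (A ⧸ Ideal.span {x}) :=
        IsLocalRing.of_surjective' mk hsurj
      have hresB := res_inf hres x hxmax
      have hIB := radical_map_quot hI hxI
      have hJB := minimalReduction_map hxJ hJ hsup
      have hmkx : mk x = 0 := Ideal.Quotient.eq_zero_iff_mem.mpr (Ideal.subset_span rfl)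
      have hspanB : Ideal.span ↑(t.image mk) = J.map mk := by
        rw [← hspan', Ideal.map_span, Finset.coe_image]
        rw [Set.image_insert_eq, hmkx]
        exact (ideal_span_insert_zero _).symm
      obtain ⟨ys, hseq, hspanys⟩ := ih (I.map mk) (J.map mk) hresB hIB hJB
        (t.image mk) hspanB (le_trans Finset.card_image_le (by omega))
      choose lf hlf using hsurj
      refine ⟨x :: ys.map lf, ?_, ?_⟩
      · rw [IsSuperficialSeq]
        refine ⟨hxI, hsup, ?_⟩
        have hmapmap : (ys.map lf).map mk = ys := by
          rw [List.map_map, show mk ∘ lf = id from funext hlf, List.map_id]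
        rw [hmapmap]
        exact hseq
      · have hset : {z : A | z ∈ x :: ys.map lf} = insert x {z : A | z ∈ ys.map lf} := by
          ext; simp [List.mem_cons]
        set S := Ideal.span {z : A | z ∈ x :: ys.map lf} with hS
        have hSx : Ideal.span {x} ≤ S := by
          apply Ideal.span_mono
          rw [hset]
          exact Set.singleton_subset_iff.mpr (Set.mem_insert _ _)
        have himg : mk '' {z : A | z ∈ x :: ys.map lf} = insert 0 {z | z ∈ ys} := by
          rw [hset, Set.image_insert_eq, hmkx]
          congr 1
          ext u
          constructor
          · rintro ⟨a, ha, rfl⟩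
            obtain ⟨y0, hy0, rfl⟩ := List.mem_map.mp ha
            rw [hlf]
            exact hy0
          · intro hu
            exact ⟨lf u, List.mem_map.mpr ⟨u, hu, rfl⟩, hlf u⟩
        have hmapS : S.map mk = J.map mk := by
          rw [hS, Ideal.map_span, himg, ideal_span_insert_zero, hspanys]
        have h1 : Ideal.comap mk (S.map mk) = S := by
          rw [Ideal.comap_map_of_surjective mk Ideal.Quotient.mk_surjective,
            ← RingHom.ker_eq_comap_bot, hmk, Ideal.mk_ker, sup_eq_left.mpr hSx]
        have h2 : Ideal.comap mk (J.map mk) = J := by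
          rw [Ideal.comap_map_of_surjective mk Ideal.Quotient.mk_surjective,
            ← RingHom.ker_eq_comap_bot, hmk, Ideal.mk_ker, sup_eq_left.mpr
              (by rwa [Ideal.span_le, Set.singleton_subset_iff])]
        rw [← h1, hmapS, h2]


end Main

end SupAux

/-- Let `(A, m)` be a `d`-dimensional Noetherian local ring with infinite residue field
and `J` a minimal reduction of an `m`-primary ideal `I`.  Then `J` can be generated by
a superficial sequence for `I`. -/
theorem statement18 {A : Type*} [CommRing A] [IsLocalRing A] [IsNoetherianRing A]
    (d : ℕ) (hdim : ringKrullDim A = (d : WithBot ℕ∞))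
    (hres : Infinite (IsLocalRing.ResidueField A))
    (I J : Ideal A) (hI : I.radical = IsLocalRing.maximalIdeal A)
    (hJ : IsMinimalReduction J I) :
    ∃ xs : List A, IsSuperficialSeq I xs ∧ Ideal.span {x | x ∈ xs} = J := by
  obtain ⟨s, hspan⟩ : ∃ s : Finset A, Ideal.span ↑s = J :=
    (IsNoetherian.noetherian J)
  exact SupAux.main s.card I J hres hI hJ s hspan le_rfl
end

section
/- Let (A,m) be a Noetherian local ring, let I be an m-primary ideal, and let x₁,…,x_r ∈ I be a superficial sequence for I. If depth A ≥ r, then x₁,…,x_r is an A-regular sequence. -/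
open IsLocalRing Polynomial

/-! ### Auxiliary development -/

section Aux

variable {A : Type*} [CommRing A]

/-- `x` is a nonzerodivisor on `A ⧸ J`. -/
def RegOn (J : Ideal A) (x : A) : Prop := ∀ a : A, x * a ∈ J → a ∈ J

/-- `l` is a regular sequence on `A ⧸ J`. -/
def RegSeq (J : Ideal A) : List A → Prop
  | [] => True
  | x :: xs => RegOn J x ∧ RegSeq (J ⊔ Ideal.span {x}) xs

/-- The set of zero divisors on `A ⧸ J`. -/
def ZD (J : Ideal A) : Set A := {a : A | ∃ u : A, u ∉ J ∧ a * u ∈ J}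

lemma regOn_iff_not_mem_ZD {J : Ideal A} {x : A} : RegOn J x ↔ x ∉ ZD J := by
  constructor
  · rintro h ⟨u, hu, hxu⟩; exact hu (h u hxu)
  · intro h a ha; by_contra h'; exact h ⟨a, h', ha⟩

@[simp] lemma regSeq_nil {J : Ideal A} : RegSeq J ([] : List A) := trivial

lemma regSeq_cons {J : Ideal A} {x : A} {l : List A} :
    RegSeq J (x :: l) ↔ RegOn J x ∧ RegSeq (J ⊔ Ideal.span {x}) l := Iff.rfl

lemma regSeq_append {l₁ l₂ : List A} {J : Ideal A} :
    RegSeq J (l₁ ++ l₂) ↔ RegSeq J l₁ ∧ RegSeq (J ⊔ Ideal.ofList l₁) l₂ := by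
  induction l₁ generalizing J with
  | nil => simp [RegSeq]
  | cons x l ih =>
      simp only [List.cons_append, regSeq_cons, ih, Ideal.ofList_cons, and_assoc, ← sup_assoc]

lemma RegSeq.take {J : Ideal A} {l : List A} (h : RegSeq J l) (k : ℕ) :
    RegSeq J (l.take k) := by
  have := (l.take_append_drop k) ▸ h
  exact (regSeq_append.mp this).1

lemma RegSeq.stage {J : Ideal A} {l : List A} (h : RegSeq J l) (i : ℕ) (hi : i < l.length) :
    RegOn (J ⊔ Ideal.ofList (l.take i)) l[i] := by
  induction l generalizing J i with
  | nil => simp at hi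
  | cons x l ih =>
      rcases i with _ | i
      · simpa using h.1
      · have := ih h.2 i (by simpa using Nat.lt_of_succ_lt_succ hi)
        simpa [Ideal.ofList_cons, sup_assoc] using this

lemma regSeq_of_stages {J : Ideal A} {l : List A}
    (h : ∀ i (hi : i < l.length), RegOn (J ⊔ Ideal.ofList (l.take i)) l[i]) :
    RegSeq J l := by
  induction l generalizing J with
  | nil => trivial
  | cons x l ih =>
      refine ⟨by have := h 0 (by simp); simp only [List.take_zero, Ideal.ofList_nil, sup_bot_eq] at this; exact this, ih fun i hi => ?_⟩
      have := h (i + 1) (by simpa using Nat.succ_lt_succ hi)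
      simpa [Ideal.ofList_cons, sup_assoc] using this

end Aux
section AssPrimes

variable {R M : Type*} [CommRing R] [AddCommGroup M] [Module R M]

theorem ass_subset_union (N : Submodule R M) :
    associatedPrimes R M ⊆ associatedPrimes R ↥N ∪ associatedPrimes R (M ⧸ N) := by
  exact associatedPrimes.subset_union_of_exact N.injective_subtype (LinearMap.exact_subtype_mkQ N)

theorem ass_span_singleton [IsNoetherianRing R] {x : M} {P : Ideal R}
    (hP : P.IsPrime) (hPx : P = (Submodule.span R {x}).annihilator) :
    associatedPrimes R ↥(Submodule.span R {x}) = {P} := by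
  have hker : LinearMap.ker (LinearMap.toSpanSingleton R M x) = P := by
    ext a
    rw [LinearMap.mem_ker, hPx, Submodule.mem_annihilator_span_singleton]
    rfl
  have e : (R ⧸ P) ≃ₗ[R] ↥(Submodule.span R {x}) :=
    (Submodule.quotEquivOfEq P _ hker.symm) ≪≫ₗ
      (LinearMap.toSpanSingleton R M x).quotKerEquivRange ≪≫ₗ
        LinearEquiv.ofEq _ _ (LinearMap.span_singleton_eq_range R M x).symm
  rw [← LinearEquiv.AssociatedPrimes.eq e,
    associatedPrimes.eq_singleton_of_isPrimary hP.isPrimary, hP.radical]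

theorem ass_finite (R M : Type*) [CommRing R] [IsNoetherianRing R] [AddCommGroup M] [Module R M]
    [IsNoetherian R M] : (associatedPrimes R M).Finite := by
  exact associatedPrimes.finite R M
end AssPrimes
section ZDAss

variable {A : Type*} [CommRing A]

lemma zd_eq_biUnion_ass [IsNoetherianRing A] (J : Ideal A) :
    ZD J = ⋃ p ∈ associatedPrimes A (A ⧸ J), (p : Set A) := by
  rw [biUnion_associatedPrimes_eq_zero_divisors]
  ext r
  constructor
  · rintro ⟨u, hu, hru⟩
    refine ⟨Ideal.Quotient.mk J u, ?_, ?_⟩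
    · simpa [Ideal.Quotient.eq_zero_iff_mem] using hu
    · show Ideal.Quotient.mk J (r * u) = 0
      rwa [Ideal.Quotient.eq_zero_iff_mem]
  · rintro ⟨u, hu, hru⟩
    obtain ⟨a, rfl⟩ := Ideal.Quotient.mk_surjective (I := J) u
    refine ⟨a, ?_, ?_⟩
    · simpa [Ideal.Quotient.eq_zero_iff_mem] using hu
    · have : Ideal.Quotient.mk J (r * a) = 0 := hru
      rwa [Ideal.Quotient.eq_zero_iff_mem] at this

lemma ass_mem_subset_zd [IsNoetherianRing A] {J : Ideal A} {P : Ideal A}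
    (hP : P ∈ associatedPrimes A (A ⧸ J)) : (P : Set A) ⊆ ZD J := by
  rw [zd_eq_biUnion_ass]
  exact Set.subset_biUnion_of_mem hP

open IsLocalRing in
lemma avoid [IsLocalRing A] [IsNoetherianRing A] (Js : List (Ideal A))
    (h : ∀ J ∈ Js, ∃ w ∈ maximalIdeal A, w ∉ ZD J) :
    ∃ z ∈ maximalIdeal A, ∀ J ∈ Js, z ∉ ZD J := by
  set T : Set (Ideal A) := ⋃ J ∈ {K : Ideal A | K ∈ Js}, associatedPrimes A (A ⧸ J) with hT
  have hTfin : T.Finite :=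
    Set.Finite.biUnion (Js.finite_toSet) fun J _ => ass_finite A (A ⧸ J)
  by_cases hsub : (↑(maximalIdeal A) : Set A) ⊆ ⋃ P ∈ T, (P : Set A)
  · exfalso
    have hsub' : ((maximalIdeal A : Ideal A) : Set A) ⊆
        ⋃ P ∈ (↑hTfin.toFinset : Set (Ideal A)), ((id P : Ideal A) : Set A) := by
      intro a ha
      have := hsub ha
      simpa [hTfin.mem_toFinset] using this
    have hprime : ∀ P ∈ hTfin.toFinset, P ≠ ⊥ → P ≠ ⊥ → (id P : Ideal A).IsPrime := by
      intro P hPmem _ _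
      rw [hTfin.mem_toFinset, hT] at hPmem
      simp only [Set.mem_iUnion] at hPmem
      obtain ⟨J, _, hPass⟩ := hPmem
      exact hPass.isPrime
    rw [Ideal.subset_union_prime ⊥ ⊥ hprime] at hsub'
    obtain ⟨P, hPmem, hmP⟩ := hsub'
    rw [hTfin.mem_toFinset, hT] at hPmem
    simp only [Set.mem_iUnion] at hPmem
    obtain ⟨J, hJ, hPass⟩ := hPmem
    obtain ⟨w, hwm, hwzd⟩ := h J hJ
    exact hwzd (ass_mem_subset_zd hPass (hmP hwm))
  · obtain ⟨z, hzm, hz⟩ := Set.not_subset.mp hsub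
    refine ⟨z, hzm, fun J hJ hzd => hz ?_⟩
    rw [zd_eq_biUnion_ass] at hzd
    simp only [Set.mem_iUnion] at hzd ⊢
    obtain ⟨P, hPass, hzP⟩ := hzd
    exact ⟨P, Set.mem_biUnion hJ hPass, hzP⟩

end ZDAss
section Swap

open IsLocalRing

variable {A : Type*} [CommRing A] [IsLocalRing A] [IsNoetherianRing A]

lemma regOn_swap {J : Ideal A} {x y : A}
    (hx : x ∈ maximalIdeal A) (hrx : RegOn J x) (hry : RegOn (J ⊔ Ideal.span {x}) y) :
    RegOn J y ∧ RegOn (J ⊔ Ideal.span {y}) x := by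
  have hKey : ∀ a : A, y * a ∈ J → a ∈ J := by
    set K : Ideal A := J.colon (Ideal.span {y}) with hK
    have hmem : ∀ a : A, a ∈ K ↔ y * a ∈ J := by
      intro a; rw [hK, Ideal.mem_colon_span_singleton, mul_comm]
    set N : Submodule A (A ⧸ (J : Submodule A A)) := Submodule.map (Submodule.mkQ J) K with hN
    have hFG : N.FG := Submodule.FG.map _ (IsNoetherian.noetherian K)
    have hle : N ≤ (maximalIdeal A) • N := by
      rintro _ ⟨a, haK, rfl⟩
      replace haK : a ∈ K := haK
      rw [hmem] at haK
      have ha' : a ∈ J ⊔ Ideal.span {x} := hry a (Ideal.mem_sup_left haK)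
      obtain ⟨j, hj, sp, hsp, hdecomp⟩ := Submodule.mem_sup.mp ha'
      obtain ⟨b, rfl⟩ := Ideal.mem_span_singleton'.mp hsp
      have hxyb : x * (y * b) ∈ J := by
        have : y * (b * x) ∈ J := by
          have : y * (b * x) = y * a - y * j := by rw [← hdecomp]; ring
          rw [this]
          exact J.sub_mem haK (J.mul_mem_left y hj)
        have heq : x * (y * b) = y * (b * x) := by ring
        rw [heq]
        exact this
      have hbK : b ∈ K := (hmem b).mpr (hrx (y * b) hxyb)
      have : Submodule.mkQ J a = x • Submodule.mkQ J b := by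
        rw [← map_smul, smul_eq_mul]
        rw [Submodule.mkQ_apply, Submodule.mkQ_apply]
        rw [Submodule.Quotient.eq]
        have : a - x * b = j := by rw [← hdecomp]; ring
        rw [this]; exact hj
      rw [this]
      exact Submodule.smul_mem_smul hx (Submodule.mem_map_of_mem hbK)
    have hjac : maximalIdeal A ≤ Ideal.jacobson ⊥ :=
      le_of_eq (IsLocalRing.jacobson_eq_maximalIdeal ⊥ bot_ne_top).symm
    have hNbot : N = ⊥ :=
      Submodule.eq_bot_of_le_smul_of_le_jacobson_bot (maximalIdeal A) N hFG hle hjac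
    intro a ha
    have haK : a ∈ K := (hmem a).mpr ha
    have : Submodule.mkQ J a ∈ N := Submodule.mem_map_of_mem haK
    rw [hNbot, Submodule.mem_bot] at this
    rwa [Submodule.mkQ_apply, Submodule.Quotient.mk_eq_zero] at this
  refine ⟨hKey, ?_⟩
  intro a ha
  obtain ⟨j, hj, sp, hsp, hdecomp⟩ := Submodule.mem_sup.mp ha
  obtain ⟨b, rfl⟩ := Ideal.mem_span_singleton'.mp hsp
  have hyb : y * b ∈ J ⊔ Ideal.span {x} := by
    have : y * b = x * a - j := by
      have : x * a = j + b * y := hdecomp.symm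
      rw [this]; ring
    rw [this]
    exact Submodule.sub_mem _ (Ideal.mem_sup_right (Ideal.mem_span_singleton'.mpr ⟨a, mul_comm a x⟩))
      (Ideal.mem_sup_left hj)
  have hb : b ∈ J ⊔ Ideal.span {x} := hry b hyb
  obtain ⟨j', hj', sp', hsp', hdecomp'⟩ := Submodule.mem_sup.mp hb
  obtain ⟨c, rfl⟩ := Ideal.mem_span_singleton'.mp hsp'
  have hxa : x * (a - c * y) ∈ J := by
    have : x * (a - c * y) = j + j' * y := by
      have h1 : x * a = j + (j' + c * x) * y := by rw [hdecomp', hdecomp]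
      linear_combination h1
    rw [this]
    exact J.add_mem hj (J.mul_mem_right y hj')
  have : a - c * y ∈ J := hrx _ hxa
  have : a = (a - c * y) + c * y := by ring
  rw [this]
  exact Submodule.add_mem _ (Ideal.mem_sup_left ‹a - c * y ∈ J›)
    (Ideal.mem_sup_right (Ideal.mem_span_singleton'.mpr ⟨c, rfl⟩))

lemma regSeq_rotate {l : List A} :
    ∀ {J : Ideal A} (_ : ∀ a ∈ l, a ∈ maximalIdeal A) {z : A},
    RegSeq J (l ++ [z]) → RegSeq J (z :: l) := by
  induction l with
  | nil => intro J _ z h; exact h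
  | cons x l ih =>
      intro J hl z h
      obtain ⟨hx, h2⟩ := h
      have hxm : x ∈ maximalIdeal A := hl x (List.mem_cons_self)
      obtain ⟨hz', h3⟩ := ih (fun a ha => hl a (List.mem_cons_of_mem x ha)) h2
      obtain ⟨hzJ, hxJz⟩ := regOn_swap hxm hx hz'
      refine ⟨hzJ, hxJz, ?_⟩
      have : J ⊔ Ideal.span {x} ⊔ Ideal.span {z} = J ⊔ Ideal.span {z} ⊔ Ideal.span {x} :=
        sup_right_comm J (Ideal.span {x}) (Ideal.span {z})
      rwa [← this]

end Swap
section Depth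

open IsLocalRing

variable {A : Type*} [CommRing A] [IsLocalRing A] [IsNoetherianRing A]

lemma exists_ann {J : Ideal A} (hsub : (↑(maximalIdeal A) : Set A) ⊆ ZD J) :
    ∃ u, u ∉ J ∧ ∀ a ∈ maximalIdeal A, a * u ∈ J := by
  have hfin := ass_finite A (A ⧸ J)
  have hsub' : ((maximalIdeal A : Ideal A) : Set A) ⊆
      ⋃ P ∈ (↑hfin.toFinset : Set (Ideal A)), ((id P : Ideal A) : Set A) := by
    intro a ha
    have := hsub ha
    rw [zd_eq_biUnion_ass] at this
    simpa [hfin.mem_toFinset] using this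
  have hprime : ∀ P ∈ hfin.toFinset, P ≠ ⊥ → P ≠ ⊥ → (id P : Ideal A).IsPrime := by
    intro P hP _ _
    rw [hfin.mem_toFinset] at hP
    exact hP.isPrime
  rw [Ideal.subset_union_prime ⊥ ⊥ hprime] at hsub'
  obtain ⟨P, hPmem, hmP⟩ := hsub'
  rw [hfin.mem_toFinset] at hPmem
  obtain ⟨hPprime, xbar, hPx⟩ := isAssociatedPrime_iff.mp hPmem
  obtain ⟨u, rfl⟩ := Ideal.Quotient.mk_surjective (I := J) xbar
  have huJ : u ∉ J := by
    intro h
    apply hPprime.ne_top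
    rw [hPx, show Ideal.Quotient.mk J u = 0 from Ideal.Quotient.eq_zero_iff_mem.mpr h,
]
    ext b; simp [Submodule.mem_colon_singleton]
  refine ⟨u, huJ, fun a ha => ?_⟩
  have haP : a ∈ P := hmP ha
  rw [hPx, Submodule.mem_colon_singleton, Submodule.mem_bot] at haP
  have : Ideal.Quotient.mk J (a * u) = 0 := haP
  rwa [Ideal.Quotient.eq_zero_iff_mem] at this

lemma exchange {J : Ideal A} {x y : A}
    (hy : y ∈ maximalIdeal A) (hrx : RegOn J x) (hry : RegOn J y)
    (hsub : (↑(maximalIdeal A) : Set A) ⊆ ZD (J ⊔ Ideal.span {x})) :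
    (↑(maximalIdeal A) : Set A) ⊆ ZD (J ⊔ Ideal.span {y}) := by
  obtain ⟨u, huJ, hu⟩ := exists_ann hsub
  obtain ⟨j, hj, sp, hsp, hdecomp⟩ := Submodule.mem_sup.mp (hu y hy)
  obtain ⟨v, rfl⟩ := Ideal.mem_span_singleton'.mp hsp
  -- hdecomp : j + v * x = y * u
  intro a ha
  refine ⟨v, ?_, ?_⟩
  · intro hv
    obtain ⟨j', hj', sp', hsp', hdecomp'⟩ := Submodule.mem_sup.mp hv
    obtain ⟨c, rfl⟩ := Ideal.mem_span_singleton'.mp hsp'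
    -- hdecomp' : j' + c * y = v
    apply huJ
    have hyu : y * (u - c * x) ∈ J := by
      have : y * (u - c * x) = j + j' * x := by
        have h1 : j + (j' + c * y) * x = y * u := by rw [hdecomp']; exact hdecomp
        linear_combination -h1
      rw [this]
      exact J.add_mem hj (J.mul_mem_right x hj')
    have := hry _ hyu
    have heq : u = (u - c * x) + c * x := by ring
    rw [heq]
    exact Submodule.add_mem _ (Ideal.mem_sup_left this)
      (Ideal.mem_sup_right (Ideal.mem_span_singleton'.mpr ⟨c, rfl⟩))
  · obtain ⟨ja, hja, spa, hspa, hdecompa⟩ := Submodule.mem_sup.mp (hu a ha)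
    obtain ⟨w, rfl⟩ := Ideal.mem_span_singleton'.mp hspa
    -- hdecompa : ja + w * x = a * u
    have hxav : x * (a * v - w * y) ∈ J := by
      have : x * (a * v - w * y) = y * ja - a * j := by
        linear_combination a * hdecomp - y * hdecompa
      rw [this]
      exact J.sub_mem (J.mul_mem_left y hja) (J.mul_mem_left a hj)
    have := hrx _ hxav
    have heq : a * v = (a * v - w * y) + w * y := by ring
    rw [heq]
    exact Submodule.add_mem _ (Ideal.mem_sup_left this)
      (Ideal.mem_sup_right (Ideal.mem_span_singleton'.mpr ⟨w, rfl⟩))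

lemma lemD : ∀ (s : ℕ) (J : Ideal A) (xs ys : List A), xs.length = s → ys.length = s + 1 →
    (∀ a ∈ xs, a ∈ maximalIdeal A) → (∀ a ∈ ys, a ∈ maximalIdeal A) →
    RegSeq J xs → RegSeq J ys →
    ¬ ((↑(maximalIdeal A) : Set A) ⊆ ZD (J ⊔ Ideal.ofList xs)) := by
  intro s
  induction s with
  | zero =>
      intro J xs ys hxl hyl _ hym hxs hys hsub
      rw [List.length_eq_zero_iff] at hxl
      subst hxl
      obtain ⟨y, rfl⟩ := List.length_eq_one_iff.mp hyl
      have hyreg : RegOn J y := hys.1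
      have hymem : y ∈ maximalIdeal A := hym y (List.mem_singleton_self y)
      rw [Ideal.ofList_nil, sup_bot_eq] at hsub
      exact (regOn_iff_not_mem_ZD.mp hyreg) (hsub hymem)
  | succ s ih =>
      intro J xs ys hxl hyl hxm hym hxs hys hsub
      rcases xs.eq_nil_or_concat' with rfl | ⟨xs₀, xl, rfl⟩
      · simp at hxl
      have hxs₀l : xs₀.length = s := by
        simpa using hxl
      -- the list of ideals to avoid
      set Js : List (Ideal A) :=
        ((List.range (s + 1)).map fun i => J ⊔ Ideal.ofList ((xs₀ ++ [xl]).take i)) ++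
        ((List.range (s + 2)).map fun j => J ⊔ Ideal.ofList (ys.take j)) with hJs
      have hwit : ∀ K ∈ Js, ∃ w ∈ maximalIdeal A, w ∉ ZD K := by
        intro K hK
        rw [hJs, List.mem_append] at hK
        rcases hK with hK | hK
        · obtain ⟨i, hi, rfl⟩ := List.mem_map.mp hK
          rw [List.mem_range] at hi
          have hi' : i < (xs₀ ++ [xl]).length := by simpa [hxs₀l] using hi
          exact ⟨(xs₀ ++ [xl])[i], hxm _ (List.getElem_mem hi'),
            regOn_iff_not_mem_ZD.mp (hxs.stage i hi')⟩
        · obtain ⟨j, hj, rfl⟩ := List.mem_map.mp hK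
          rw [List.mem_range] at hj
          have hj' : j < ys.length := by omega
          exact ⟨ys[j], hym _ (List.getElem_mem hj'),
            regOn_iff_not_mem_ZD.mp (hys.stage j hj')⟩
      obtain ⟨z, hzm, hz⟩ := avoid Js hwit
      have htake : (xs₀ ++ [xl]).take s = xs₀ := List.take_left' hxs₀l
      have hz1 : RegOn (J ⊔ Ideal.ofList xs₀) z := by
        have hmem : (J ⊔ Ideal.ofList xs₀) ∈ Js := by
          rw [hJs, List.mem_append]
          left
          exact List.mem_map.mpr ⟨s, List.mem_range.mpr (by omega), by rw [htake]⟩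
        exact regOn_iff_not_mem_ZD.mpr (hz _ hmem)
      have hz2 : RegOn (J ⊔ Ideal.ofList (ys.take (s + 1))) z := by
        have hmem : (J ⊔ Ideal.ofList (ys.take (s + 1))) ∈ Js := by
          rw [hJs, List.mem_append]
          right
          exact List.mem_map.mpr ⟨s + 1, List.mem_range.mpr (by omega), rfl⟩
        exact regOn_iff_not_mem_ZD.mpr (hz _ hmem)
      have hxsplit := regSeq_append.mp hxs
      have hxl_reg : RegOn (J ⊔ Ideal.ofList xs₀) xl := hxsplit.2.1
      have hofl : Ideal.ofList (xs₀ ++ [xl]) = Ideal.ofList xs₀ ⊔ Ideal.span {xl} := by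
        rw [Ideal.ofList_append, Ideal.ofList_cons, Ideal.ofList_nil, sup_bot_eq]
      rw [hofl, ← sup_assoc] at hsub
      have hsub' := exchange hzm hxl_reg hz1 hsub
      -- rotate to put z first
      have hxm₀ : ∀ a ∈ xs₀, a ∈ maximalIdeal A := fun a ha =>
        hxm a (List.mem_append.mpr (Or.inl ha))
      have hrotx : RegSeq J (z :: xs₀) :=
        regSeq_rotate hxm₀ (regSeq_append.mpr ⟨hxsplit.1, hz1, trivial⟩)
      have hymt : ∀ a ∈ ys.take (s + 1), a ∈ maximalIdeal A := fun a ha =>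
        hym a (List.mem_of_mem_take ha)
      have hroty : RegSeq J (z :: ys.take (s + 1)) :=
        regSeq_rotate hymt (regSeq_append.mpr ⟨hys.take (s + 1), hz2, trivial⟩)
      have hys_take_len : (ys.take (s + 1)).length = s + 1 := by
        rw [List.length_take]; omega
      have := ih (J ⊔ Ideal.span {z}) xs₀ (ys.take (s + 1)) hxs₀l hys_take_len hxm₀ hymt
        hrotx.2 hroty.2
      apply this
      rwa [sup_right_comm] at hsub'

end Depth
section Transfer

variable {A : Type*} [CommRing A]

lemma mem_map_quot_iff (x : A) (J : Ideal A) (a : A) :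
    Ideal.Quotient.mk (Ideal.span {x}) a ∈ J.map (Ideal.Quotient.mk (Ideal.span {x})) ↔
      a ∈ Ideal.span {x} ⊔ J := by
  constructor
  · intro h
    have : a ∈ Ideal.comap (Ideal.Quotient.mk (Ideal.span {x}))
        (J.map (Ideal.Quotient.mk (Ideal.span {x}))) := h
    rw [Ideal.comap_map_of_surjective _ Ideal.Quotient.mk_surjective] at this
    have hker : Ideal.comap (Ideal.Quotient.mk (Ideal.span {x})) ⊥ = Ideal.span {x} :=
      Ideal.mk_ker
    rw [hker] at this
    rwa [sup_comm] at this
  · intro h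
    rw [sup_comm] at h
    have : a ∈ Ideal.comap (Ideal.Quotient.mk (Ideal.span {x}))
        (J.map (Ideal.Quotient.mk (Ideal.span {x}))) := by
      rw [Ideal.comap_map_of_surjective _ Ideal.Quotient.mk_surjective]
      have hker : Ideal.comap (Ideal.Quotient.mk (Ideal.span {x})) ⊥ = Ideal.span {x} :=
        Ideal.mk_ker
      rw [hker]
      exact h
    exact this

lemma regOn_map_quot_iff (x : A) (J : Ideal A) (z : A) :
    RegOn (J.map (Ideal.Quotient.mk (Ideal.span {x}))) (Ideal.Quotient.mk (Ideal.span {x}) z) ↔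
      RegOn (Ideal.span {x} ⊔ J) z := by
  constructor
  · intro h a ha
    have : Ideal.Quotient.mk (Ideal.span {x}) (z * a) ∈
        J.map (Ideal.Quotient.mk (Ideal.span {x})) := (mem_map_quot_iff x J _).mpr ha
    rw [map_mul] at this
    have := h _ this
    exact (mem_map_quot_iff x J a).mp this
  · intro h b hb
    obtain ⟨a, rfl⟩ := Ideal.Quotient.mk_surjective (I := Ideal.span {x}) b
    rw [← map_mul] at hb
    have := h a ((mem_map_quot_iff x J _).mp hb)
    exact (mem_map_quot_iff x J a).mpr this

lemma regSeq_map_quot_iff (x : A) (zs : List A) : ∀ (J : Ideal A),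
    RegSeq (J.map (Ideal.Quotient.mk (Ideal.span {x})))
      (zs.map (Ideal.Quotient.mk (Ideal.span {x}))) ↔
    RegSeq (Ideal.span {x} ⊔ J) zs := by
  induction zs with
  | nil => intro J; simp [RegSeq]
  | cons z zs ih =>
      intro J
      rw [List.map_cons]
      rw [regSeq_cons, regSeq_cons]
      rw [regOn_map_quot_iff]
      have hspan : Ideal.span {Ideal.Quotient.mk (Ideal.span {x}) z} =
          (Ideal.span {z}).map (Ideal.Quotient.mk (Ideal.span {x})) := by
        rw [Ideal.map_span, Set.image_singleton]
      rw [hspan, ← Ideal.map_sup, ih (J ⊔ Ideal.span {z}), ← sup_assoc]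

end Transfer

section Superficial

open IsLocalRing

variable {A : Type*} [CommRing A] [IsLocalRing A] [IsNoetherianRing A]

omit [IsLocalRing A] [IsNoetherianRing A] in
lemma regOn_bot_pow {y : A} (hy : RegOn (⊥ : Ideal A) y) (k : ℕ) :
    RegOn (⊥ : Ideal A) (y ^ k) := by
  induction k with
  | zero => intro a ha; rwa [pow_zero, one_mul] at ha
  | succ k ih =>
      intro a ha
      rw [pow_succ] at ha
      have : y * (y ^ k * a) ∈ (⊥ : Ideal A) := by
        rw [show y * (y ^ k * a) = y ^ k * y * a by ring]; exact ha
      exact ih a (hy _ this)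

lemma superficial_regOn (I : Ideal A) (hIrad : I.radical = maximalIdeal A)
    {x : A} (hx : IsSuperficial I x) {y : A} (hym : y ∈ maximalIdeal A)
    (hyreg : RegOn (⊥ : Ideal A) y) : RegOn (⊥ : Ideal A) x := by
  obtain ⟨c, hc⟩ := hx
  obtain ⟨N, hN⟩ := Ideal.exists_radical_pow_le_of_fg I (IsNoetherian.noetherian _)
  intro a ha
  rw [Ideal.mem_bot] at ha ⊢
  have hIne : I ≠ ⊤ := by
    intro h
    rw [h, Ideal.radical_top] at hIrad
    exact (IsLocalRing.maximalIdeal.isMaximal A).ne_top hIrad.symm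
  have hKrull : ⨅ n : ℕ, I ^ n = ⊥ := Ideal.iInf_pow_eq_bot_of_isLocalRing I hIne
  have key : ∀ w, w ∈ I ^ c → a * w = 0 := by
    intro w hw
    have hmem : ∀ n, n > c → a * w ∈ I ^ (n - 1) := by
      intro n hn
      rw [← hc n hn]
      refine Submodule.mem_inf.mpr ⟨?_, Ideal.mul_mem_left _ a hw⟩
      rw [Ideal.mem_colon_span_singleton]
      have : a * w * x = w * (x * a) := by ring
      rw [this, ha, mul_zero]
      exact Submodule.zero_mem _
    have hall : ∀ k, a * w ∈ I ^ k := by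
      intro k
      have h1 := hmem (max (c + 1) (k + 1)) (by omega)
      exact Ideal.pow_le_pow_right (by omega) h1
    have : a * w ∈ ⨅ n : ℕ, I ^ n := Submodule.mem_iInf _ |>.mpr hall
    rwa [hKrull, Ideal.mem_bot] at this
  have hyNc : y ^ (N * c) ∈ I ^ c := by
    have h1 : (maximalIdeal A) ^ N ≤ I := by rw [← hIrad]; exact hN
    rw [pow_mul]
    exact Ideal.pow_mem_pow (h1 (Ideal.pow_mem_pow hym N)) c
  have h0 := key _ hyNc
  have := regOn_bot_pow hyreg (N * c) a (by rw [Ideal.mem_bot, mul_comm]; exact h0)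
  rwa [Ideal.mem_bot] at this

end Superficial
section Conversion

variable {A : Type*} [CommRing A]

lemma ideal_smul_top (N : Ideal A) : (N • ⊤ : Submodule A A) = (N : Submodule A A) := by
  apply le_antisymm
  · exact Submodule.smul_le.mpr fun r hr m _ => by
      simpa [smul_eq_mul] using N.mul_mem_right m hr
  · intro a ha
    have := Submodule.smul_mem_smul ha (Submodule.mem_top (x := (1 : A)))
    simpa [smul_eq_mul] using this

lemma isSMulRegular_quot_iff (N : Ideal A) (x : A) :
    IsSMulRegular (A ⧸ (N • ⊤ : Submodule A A)) x ↔ RegOn N x := by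
  have hmem : ∀ b : A, b ∈ N * ⊤ ↔ b ∈ N := fun b => by rw [Ideal.mul_top]
  have hsm : ∀ b c : A, b • c = b * c := fun b c => rfl
  constructor
  · intro h a ha
    have h0 : x • (Submodule.Quotient.mk a : A ⧸ (N • ⊤ : Submodule A A)) =
        x • (0 : A ⧸ (N • ⊤ : Submodule A A)) := by
      rw [smul_zero, ← Submodule.Quotient.mk_smul, Submodule.Quotient.mk_eq_zero]
      rw [hsm]
      exact (hmem _).mpr ha
    have := h h0
    rw [Submodule.Quotient.mk_eq_zero] at this
    exact (hmem _).mp this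
  · intro h u v huv
    obtain ⟨a, rfl⟩ := Submodule.Quotient.mk_surjective _ u
    obtain ⟨b, rfl⟩ := Submodule.Quotient.mk_surjective _ v
    replace huv : x • (Submodule.Quotient.mk a : A ⧸ (N • ⊤ : Submodule A A)) =
        x • (Submodule.Quotient.mk b : A ⧸ (N • ⊤ : Submodule A A)) := huv
    rw [← Submodule.Quotient.mk_smul, ← Submodule.Quotient.mk_smul,
      Submodule.Quotient.eq] at huv
    rw [Submodule.Quotient.eq]
    replace huv := (hmem _).mp huv
    rw [hsm, hsm] at huv
    have : x * (a - b) ∈ N := by rw [mul_sub]; exact huv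
    exact (hmem _).mpr (h _ this)

lemma isWeaklyRegular_iff_regSeq (l : List A) :
    RingTheory.Sequence.IsWeaklyRegular A l ↔ RegSeq (⊥ : Ideal A) l := by
  rw [RingTheory.Sequence.isWeaklyRegular_iff]
  constructor
  · intro h
    apply regSeq_of_stages
    intro i hi
    rw [bot_sup_eq]
    exact (isSMulRegular_quot_iff _ _).mp (h i hi)
  · intro h i hi
    have := h.stage i hi
    rw [bot_sup_eq] at this
    exact (isSMulRegular_quot_iff _ _).mpr this

end Conversion

section QuotFacts

open IsLocalRing

variable {A : Type*} [CommRing A] [IsLocalRing A]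

lemma span_ne_top {x : A} (hx : x ∈ maximalIdeal A) : Ideal.span {x} ≠ ⊤ := by
  intro h
  have hle : Ideal.span {x} ≤ maximalIdeal A := by
    rw [Ideal.span_le, Set.singleton_subset_iff]; exact hx
  rw [h] at hle
  exact (maximalIdeal.isMaximal A).ne_top (top_le_iff.mp hle)

lemma quot_mem_max {x : A} (hx : x ∈ maximalIdeal A) {z : A} (hz : z ∈ maximalIdeal A) :
    haveI : Nontrivial (A ⧸ Ideal.span {x}) := Ideal.Quotient.nontrivial_iff.mpr (span_ne_top hx)
    haveI : IsLocalRing (A ⧸ Ideal.span {x}) :=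
      IsLocalRing.of_surjective' _ Ideal.Quotient.mk_surjective
    Ideal.Quotient.mk (Ideal.span {x}) z ∈ maximalIdeal (A ⧸ Ideal.span {x}) := by
  haveI : Nontrivial (A ⧸ Ideal.span {x}) := Ideal.Quotient.nontrivial_iff.mpr (span_ne_top hx)
  haveI : IsLocalRing (A ⧸ Ideal.span {x}) :=
    IsLocalRing.of_surjective' _ Ideal.Quotient.mk_surjective
  rw [IsLocalRing.mem_maximalIdeal, mem_nonunits_iff]
  intro hunit
  obtain ⟨w', hww⟩ := isUnit_iff_exists_inv.mp hunit
  obtain ⟨w, rfl⟩ := Ideal.Quotient.mk_surjective (I := Ideal.span {x}) w'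
  rw [← map_mul, ← map_one (Ideal.Quotient.mk (Ideal.span {x})), Ideal.Quotient.eq] at hww
  have h1 : z * w - 1 ∈ maximalIdeal A := by
    have hle : Ideal.span {x} ≤ maximalIdeal A := by
      rw [Ideal.span_le, Set.singleton_subset_iff]; exact hx
    exact hle hww
  have h2 : (1 : A) ∈ maximalIdeal A := by
    have := Submodule.sub_mem _ ((maximalIdeal A).mul_mem_right w hz) h1
    simpa using this
  exact (maximalIdeal.isMaximal A).ne_top (Ideal.eq_top_iff_one _ |>.mpr h2)

lemma quot_mem_max_rev {x : A} (hx : x ∈ maximalIdeal A) {z : A}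
    [IsLocalRing (A ⧸ Ideal.span {x})]
    (hz : Ideal.Quotient.mk (Ideal.span {x}) z ∈ maximalIdeal (A ⧸ Ideal.span {x})) :
    z ∈ maximalIdeal A := by
  by_contra h
  have : IsUnit z := by
    rw [IsLocalRing.mem_maximalIdeal, mem_nonunits_iff, not_not] at h
    exact h
  have : IsUnit (Ideal.Quotient.mk (Ideal.span {x}) z) := this.map _
  rw [IsLocalRing.mem_maximalIdeal, mem_nonunits_iff] at hz
  exact hz this

end QuotFacts
section Main

open IsLocalRing

universe u

lemma main_induction : ∀ (n : ℕ) {B : Type u} [CommRing B] [IsLocalRing B] [IsNoetherianRing B]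
    (I : Ideal B), I.radical = maximalIdeal B → ∀ (xs : List B), xs.length = n →
    IsSuperficialSeq I xs → ∀ (ys : List B), (∀ y ∈ ys, y ∈ maximalIdeal B) →
    RegSeq (⊥ : Ideal B) ys → n ≤ ys.length →
    RegSeq (⊥ : Ideal B) xs ∧ ∀ x ∈ xs, x ∈ maximalIdeal B := by
  intro n
  induction n with
  | zero =>
      intro B _ _ _ I hI xs hlen _ ys _ _ _
      rw [List.length_eq_zero_iff] at hlen
      subst hlen
      exact ⟨trivial, by simp⟩
  | succ n ih =>
      intro B _ _ _ I hI xs hlen hxs ys hysm hysr hyslen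
      cases xs with
      | nil => simp at hlen
      | cons x xs' =>
        rw [IsSuperficialSeq] at hxs
        obtain ⟨hxI, hxsup, htail⟩ := hxs
        have hxm : x ∈ maximalIdeal B := hI ▸ Ideal.le_radical hxI
        cases ys with
        | nil => simp at hyslen
        | cons y ys'' =>
          have hym : y ∈ maximalIdeal B := hysm y (List.mem_cons_self)
          have hxreg : RegOn (⊥ : Ideal B) x := superficial_regOn I hI hxsup hym hysr.1
          -- build a regular sequence of length n on B ⧸ (x)
          have build : ∀ k, k ≤ n → ∃ zs : List B, zs.length = k ∧
              (∀ z ∈ zs, z ∈ maximalIdeal B) ∧ RegSeq (⊥ : Ideal B) (x :: zs) := by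
            intro k
            induction k with
            | zero => intro _; exact ⟨[], rfl, by simp, hxreg, trivial⟩
            | succ k ihk =>
                intro hk
                obtain ⟨zs, hzl, hzm, hzreg⟩ := ihk (by omega)
                have hxzm : ∀ a ∈ x :: zs, a ∈ maximalIdeal B := by
                  intro a ha
                  rcases List.mem_cons.mp ha with rfl | ha
                  · exact hxm
                  · exact hzm a ha
                have hymt : ∀ a ∈ (y :: ys'').take (k + 2), a ∈ maximalIdeal B :=
                  fun a ha => hysm a (List.mem_of_mem_take ha)
                have hlemD := lemD (k + 1) ⊥ (x :: zs) ((y :: ys'').take (k + 2))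
                  (by simp [hzl]) (by rw [List.length_take]; simp at hyslen ⊢; omega)
                  hxzm hymt hzreg (hysr.take (k + 2))
                obtain ⟨z, hzmem, hznot⟩ := Set.not_subset.mp hlemD
                refine ⟨zs ++ [z], by simp [hzl], ?_, ?_⟩
                · intro a ha
                  rcases List.mem_append.mp ha with ha | ha
                  · exact hzm a ha
                  · rw [List.mem_singleton] at ha; subst ha; exact hzmem
                · have : RegSeq (⊥ : Ideal B) ((x :: zs) ++ [z]) :=
                    regSeq_append.mpr ⟨hzreg, regOn_iff_not_mem_ZD.mpr hznot, trivial⟩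
                  simpa using this
          obtain ⟨zs, hzl, hzm, hzreg⟩ := build n le_rfl
          -- pass to the quotient ring
          have hspan_ne : Ideal.span {x} ≠ ⊤ := span_ne_top hxm
          haveI : Nontrivial (B ⧸ Ideal.span {x}) := Ideal.Quotient.nontrivial_iff.mpr hspan_ne
          haveI : IsLocalRing (B ⧸ Ideal.span {x}) :=
            IsLocalRing.of_surjective' _ Ideal.Quotient.mk_surjective
          obtain ⟨N, hN⟩ := Ideal.exists_radical_pow_le_of_fg I (IsNoetherian.noetherian _)
          rw [hI] at hN
          have hI' : (I.map (Ideal.Quotient.mk (Ideal.span {x}))).radical =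
              maximalIdeal (B ⧸ Ideal.span {x}) := by
            apply le_antisymm
            · have hle : I.map (Ideal.Quotient.mk (Ideal.span {x})) ≤
                  maximalIdeal (B ⧸ Ideal.span {x}) := by
                rw [Ideal.map_le_iff_le_comap]
                intro a ha
                exact quot_mem_max hxm (hI ▸ Ideal.le_radical ha)
              calc (I.map (Ideal.Quotient.mk (Ideal.span {x}))).radical
                  ≤ (maximalIdeal (B ⧸ Ideal.span {x})).radical := Ideal.radical_mono hle
                _ = maximalIdeal (B ⧸ Ideal.span {x}) :=
                    (maximalIdeal.isMaximal _).isPrime.radical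
            · intro b hb
              obtain ⟨a, rfl⟩ := Ideal.Quotient.mk_surjective
                (I := Ideal.span {x}) b
              have ham : a ∈ maximalIdeal B := quot_mem_max_rev hxm hb
              have haN : a ^ N ∈ I := hN (Ideal.pow_mem_pow ham N)
              exact ⟨N, by rw [← map_pow]; exact Ideal.mem_map_of_mem _ haN⟩
          -- transfer the regular sequence zs to the quotient
          have hzs' : RegSeq (⊥ : Ideal (B ⧸ Ideal.span {x}))
              (zs.map (Ideal.Quotient.mk (Ideal.span {x}))) := by
            have := (regSeq_map_quot_iff x zs ⊥).mpr (by
              have := hzreg.2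
              rwa [bot_sup_eq, ← sup_bot_eq (Ideal.span {x})] at this)
            rwa [Ideal.map_bot] at this
          have ihres := ih (I.map (Ideal.Quotient.mk (Ideal.span {x}))) hI'
            (xs'.map (Ideal.Quotient.mk (Ideal.span {x}))) (by simpa using hlen)
            htail (zs.map (Ideal.Quotient.mk (Ideal.span {x})))
            (by
              intro w hw
              obtain ⟨z, hz, rfl⟩ := List.mem_map.mp hw
              exact quot_mem_max hxm (hzm z hz))
            hzs' (by simp [hzl])
          obtain ⟨hreg', hmem'⟩ := ihres
          have hback : RegSeq (Ideal.span {x}) xs' := by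
            have := (regSeq_map_quot_iff x xs' ⊥).mp (by rwa [Ideal.map_bot])
            rwa [sup_bot_eq] at this
          refine ⟨⟨hxreg, by rwa [bot_sup_eq]⟩, ?_⟩
          intro a ha
          rcases List.mem_cons.mp ha with rfl | ha
          · exact hxm
          · exact quot_mem_max_rev hxm (hmem' _ (List.mem_map_of_mem ha))

end Main
/-- Let `(A, m)` be a Noetherian local ring, `I` an `m`-primary ideal, and
`x₁, …, x_r ∈ I` a superficial sequence for `I`.  If `depth A ≥ r`, then
`x₁, …, x_r` is an `A`-regular sequence. -/
theorem statement19 {A : Type*} [CommRing A] [IsLocalRing A] [IsNoetherianRing A]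
    (I : Ideal A) (hI : I.radical = IsLocalRing.maximalIdeal A)
    (r : ℕ) (xs : List A) (hlen : xs.length = r) (hxs : IsSuperficialSeq I xs)
    (hdepth : (r : ℕ∞) ≤ ringDepth (IsLocalRing.maximalIdeal A)) :
    RingTheory.Sequence.IsRegular A xs := by
  rcases Nat.eq_zero_or_pos r with rfl | hr
  · rw [List.length_eq_zero_iff] at hlen
    subst hlen
    rw [RingTheory.Sequence.isRegular_iff]
    refine ⟨RingTheory.Sequence.IsWeaklyRegular.nil A A, ?_⟩
    rw [Ideal.ofList_nil, Submodule.bot_smul]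
    exact top_ne_bot
  · -- extract a regular sequence of length ≥ r from the depth hypothesis
    have hex : ∃ n ∈ {n : ℕ∞ | ∃ rs : List A, (∀ x ∈ rs, x ∈ IsLocalRing.maximalIdeal A) ∧
        RingTheory.Sequence.IsRegular A rs ∧ (rs.length : ℕ∞) = n}, (r : ℕ∞) ≤ n := by
      by_contra hcon
      push_neg at hcon
      have hb : ringDepth (IsLocalRing.maximalIdeal A) ≤ ((r - 1 : ℕ) : ℕ∞) := by
        apply sSup_le
        intro n hn
        have hlt := hcon n hn
        have hne : n ≠ ⊤ := by
          intro h
          rw [h] at hlt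
          exact not_top_lt hlt
        lift n to ℕ using hne with k
        rw [Nat.cast_lt] at hlt
        rw [Nat.cast_le]
        omega
      have : (r : ℕ∞) ≤ ((r - 1 : ℕ) : ℕ∞) := le_trans hdepth hb
      rw [Nat.cast_le] at this
      omega
    obtain ⟨n, ⟨rs, hrsm, hrsreg, hrslen⟩, hrn⟩ := hex
    have hrlen : r ≤ rs.length := by
      rw [← hrslen, Nat.cast_le] at hrn
      exact hrn
    have hrs_regseq : RegSeq (⊥ : Ideal A) rs :=
      (isWeaklyRegular_iff_regSeq rs).mp hrsreg.toIsWeaklyRegular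
    set ys := rs.take r with hys
    have hysm : ∀ y ∈ ys, y ∈ IsLocalRing.maximalIdeal A :=
      fun y hy => hrsm y (List.mem_of_mem_take hy)
    have hysreg : RegSeq (⊥ : Ideal A) ys := hrs_regseq.take r
    have hyslen : r ≤ ys.length := by rw [hys, List.length_take]; omega
    obtain ⟨hreg, hmem⟩ := main_induction r I hI xs hlen hxs ys hysm hysreg hyslen
    rw [IsLocalRing.isRegular_iff_isWeaklyRegular_of_subset_maximalIdeal hmem]
    exact (isWeaklyRegular_iff_regSeq xs).mpr hreg
end
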